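/- arXiv:1509.00398 — 8 statements merged into one kernel-verified Lean document; each statement's English description precedes it below -/
import Mathlib

section
/- Let d ≥ 1, let U be a unitary d×d complex matrix with c = max_{k,i} |U_{ki}|, and let (α, β) be a dual pair (α, β ∈ [1/2, ∞] with 1/α + 1/β = 2). Then for every density matrix ρ on ℂ^d one has H_α(p^ρ) + H_β(q^ρ) ≥ -log(c²). -/
open Matrix
open scoped ENNReal ComplexOrder

/-- Rényi entropy with parameter `α ∈ [0, ∞]` of a probability vector `p`
(natural logarithm): `H_∞(p) = -log max_j p(j)`, `H_1(p) = -∑ p log p`,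
and otherwise `H_α(p) = (1-α)⁻¹ log ∑_j p(j)^α`. -/
noncomputable def renyiEntropy {ι : Type} [Fintype ι] (α : ℝ≥0∞) (p : ι → ℝ) : ℝ :=
  if α = ⊤ then - Real.log (sSup (Set.range p))
  else if α = 1 then - ∑ j, p j * Real.log (p j)
  else (1 - α.toReal)⁻¹ * Real.log (∑ j, p j ^ α.toReal)

/-!
Write `ρ = S Sᴴ` and let `x i` be the rows of `S`, so that `p i = ‖x i‖²` and
`q k = ‖∑ i, U k i • x i‖²`. On families of vectors, `x ↦ U x` is bounded `ℓ¹ → ℓ^∞` by `c` and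
is an isometry `ℓ² → ℓ²`. Interpolating between the two (Riesz–Thorin, via the Hadamard three
lines theorem) gives `‖U x‖_{2/θ} ≤ c^{1-θ} ‖x‖_{2/(2-θ)}` for `0 < θ ≤ 1`, which after taking
logarithms is the inequality for `α = 1/(2-θ)`, `β = 1/θ`. The pair `(1/2, ∞)` is the
`ℓ¹ → ℓ^∞` bound itself, the Shannon pair `(1, 1)` is the limit `θ → 1`, and pairs with `α > 1`
follow by exchanging the roles of `U` and `Uᴴ`.
-/

open Finset Filter Topology
open scoped InnerProductSpace

namespace Matrix

variable {ι κ E : Type*} [Fintype ι] [Fintype κ] [NormedAddCommGroup E] [InnerProductSpace ℂ E]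

def smulVec (U : Matrix κ ι ℂ) (x : ι → E) (k : κ) : E := ∑ i, U k i • x i

lemma sum_inner_smulVec_self [DecidableEq ι] {U : Matrix κ ι ℂ} (hU : Uᴴ * U = 1) (x : ι → E) :
    ∑ k, ⟪U.smulVec x k, U.smulVec x k⟫_ℂ = ∑ i, ⟪x i, x i⟫_ℂ := by
  calc ∑ k, ⟪U.smulVec x k, U.smulVec x k⟫_ℂ
      = ∑ j, ∑ i, (Uᴴ * U) i j * ⟪x i, x j⟫_ℂ := by
        simp only [smulVec, sum_inner, inner_sum, inner_smul_left, inner_smul_right, mul_apply,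
          conjTranspose_apply, sum_mul, mul_sum, Complex.star_def]
        rw [sum_comm]
        refine sum_congr rfl fun j _ => ?_
        rw [sum_comm]
        refine sum_congr rfl fun i _ => sum_congr rfl fun k _ => ?_
        ring
    _ = ∑ i, ⟪x i, x i⟫_ℂ := by simp [hU, one_apply]

lemma sum_norm_smulVec_sq [DecidableEq ι] {U : Matrix κ ι ℂ} (hU : Uᴴ * U = 1) (x : ι → E) :
    ∑ k, ‖U.smulVec x k‖ ^ 2 = ∑ i, ‖x i‖ ^ 2 := by
  have := congrArg RCLike.re (sum_inner_smulVec_self hU x)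
  simpa only [map_sum, inner_self_eq_norm_sq] using this

lemma smulVec_smulVec (U : Matrix κ ι ℂ) {ν : Type*} [Fintype ν] (V : Matrix ν κ ℂ) (x : ι → E) :
    V.smulVec (U.smulVec x) = (V * U).smulVec x := by
  ext n
  simp only [smulVec, smul_sum, smul_smul, mul_apply, sum_smul]
  exact sum_comm

@[simp]
lemma one_smulVec [DecidableEq ι] (x : ι → E) : (1 : Matrix ι ι ℂ).smulVec x = x := by
  ext i
  simp [smulVec, one_apply, ite_smul]

omit [Fintype κ] in
lemma norm_smulVec_le {U : Matrix κ ι ℂ} {c : ℝ} (hc : ∀ k i, ‖U k i‖ ≤ c) (x : ι → E) (k : κ) :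
    ‖U.smulVec x k‖ ≤ c * ∑ i, ‖x i‖ := by
  rw [mul_sum]
  refine (norm_sum_le _ _).trans (sum_le_sum fun i _ => ?_)
  rw [norm_smul]
  exact mul_le_mul_of_nonneg_right (hc k i) (norm_nonneg _)

lemma sum_mul_norm_smulVec_le_of_norm_le {U : Matrix κ ι ℂ} {c : ℝ} (hc : ∀ k i, ‖U k i‖ ≤ c)
    (x : ι → E) {b : κ → ℝ} (hb : 0 ≤ b) :
    ∑ k, b k * ‖U.smulVec x k‖ ≤ c * (∑ i, ‖x i‖) * ∑ k, b k :=
  calc ∑ k, b k * ‖U.smulVec x k‖ ≤ ∑ k, b k * (c * ∑ i, ‖x i‖) :=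
        sum_le_sum fun k _ => mul_le_mul_of_nonneg_left (norm_smulVec_le hc x k) (hb k)
    _ = c * (∑ i, ‖x i‖) * ∑ k, b k := by rw [← sum_mul, mul_comm]

lemma sum_mul_norm_smulVec_le_of_isometry [DecidableEq ι] {U : Matrix κ ι ℂ} (hU : Uᴴ * U = 1)
    (x : ι → E) (b : κ → ℝ) :
    ∑ k, b k * ‖U.smulVec x k‖ ≤ √(∑ i, ‖x i‖ ^ 2) * √(∑ k, b k ^ 2) := by
  rw [mul_comm, ← sum_norm_smulVec_sq hU]
  exact Real.sum_mul_le_sqrt_mul_sqrt _ _ _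

end Matrix

section Interpolation

open Complex HadamardThreeLines

variable {ι κ E : Type*} [Fintype ι] [Fintype κ] [NormedAddCommGroup E] [InnerProductSpace ℂ E]

/-- `‖v‖ ^ (w - 1) • v`, written so that it is entire in `w` and vanishes at `v = 0`. -/
noncomputable def normPowSMul (w : ℂ) (v : E) : E := exp ((w - 1) * Real.log ‖v‖) • v

lemma norm_normPowSMul (v : E) {w : ℂ} (hw : 0 < w.re) : ‖normPowSMul w v‖ = ‖v‖ ^ w.re := by
  rcases (norm_nonneg v).eq_or_lt with hv | hv
  · simp [normPowSMul, ← hv, Real.zero_rpow hw.ne']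
  · rw [normPowSMul, norm_smul, norm_exp, Real.rpow_def_of_pos hv]
    conv_rhs =>
      rw [show w.re = (w.re - 1) + 1 by ring, mul_add, mul_one, Real.exp_add, Real.exp_log hv]
    simp [mul_comm]

@[simp]
lemma normPowSMul_one (v : E) : normPowSMul 1 v = v := by simp [normPowSMul]

lemma Real.rpow_le_rpow_add_rpow {r a b u : ℝ} (hr : 0 ≤ r) (ha : 0 < a) (hau : a ≤ u)
    (hub : u ≤ b) : r ^ u ≤ r ^ a + r ^ b := by
  rcases le_total r 1 with h1 | h1
  · rcases hr.eq_or_lt with rfl | hr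
    · rw [Real.zero_rpow (ha.trans_le hau).ne', Real.zero_rpow ha.ne', zero_add]
      positivity
    · exact (Real.rpow_le_rpow_of_exponent_ge hr h1 hau).trans
        (le_add_of_nonneg_right (by positivity))
  · exact (Real.rpow_le_rpow_of_exponent_le h1 hub).trans (le_add_of_nonneg_left (by positivity))

/-- The pairing of `‖y‖ ^ (w̄ - 1) • y` with `U (‖x‖ ^ (w - 1) • x)`, which is entire in `w`. -/
noncomputable def pairingPow (U : Matrix κ ι ℂ) (x : ι → E) (y : κ → E) (w : ℂ) : ℂ :=
  ∑ k, exp ((w - 1) * Real.log ‖y k‖) * ⟪y k, U.smulVec (fun i => normPowSMul w (x i)) k⟫_ℂ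

lemma differentiable_pairingPow (U : Matrix κ ι ℂ) (x : ι → E) (y : κ → E) :
    Differentiable ℂ (pairingPow U x y) := by
  unfold pairingPow Matrix.smulVec normPowSMul
  simp only [inner_sum, inner_smul_right]
  fun_prop

@[simp]
lemma pairingPow_one (U : Matrix κ ι ℂ) (x : ι → E) (y : κ → E) :
    pairingPow U x y 1 = ∑ k, ⟪y k, U.smulVec x k⟫_ℂ := by
  simp [pairingPow]

lemma norm_pairingPow_le (U : Matrix κ ι ℂ) (x : ι → E) (y : κ → E) {w : ℂ} (hw : 0 < w.re) :
    ‖pairingPow U x y w‖ ≤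
      ∑ k, ‖y k‖ ^ w.re * ‖U.smulVec (fun i => normPowSMul w (x i)) k‖ := by
  refine (norm_sum_le _ _).trans (sum_le_sum fun k _ => ?_)
  rw [← norm_normPowSMul (y k) hw, normPowSMul, norm_smul, norm_mul, mul_assoc]
  exact mul_le_mul_of_nonneg_left (norm_inner_le_norm _ _) (norm_nonneg _)

lemma norm_pairingPow_le_of_norm_le {U : Matrix κ ι ℂ} {c : ℝ} (hc : ∀ k i, ‖U k i‖ ≤ c)
    (x : ι → E) (y : κ → E) {w : ℂ} (hw : 0 < w.re) :
    ‖pairingPow U x y w‖ ≤ c * (∑ i, ‖x i‖ ^ w.re) * ∑ k, ‖y k‖ ^ w.re := by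
  refine (norm_pairingPow_le U x y hw).trans ?_
  simpa only [norm_normPowSMul _ hw] using
    Matrix.sum_mul_norm_smulVec_le_of_norm_le hc (fun i => normPowSMul w (x i))
      (fun k => by positivity)

lemma norm_pairingPow_le_of_re_mem_Icc {U : Matrix κ ι ℂ} {c : ℝ} (hc : ∀ k i, ‖U k i‖ ≤ c)
    (hc0 : 0 ≤ c) (x : ι → E) (y : κ → E) {a b : ℝ} (ha : 0 < a) {w : ℂ}
    (hw : w.re ∈ Set.Icc a b) :
    ‖pairingPow U x y w‖ ≤ c * (∑ i, (‖x i‖ ^ a + ‖x i‖ ^ b)) * ∑ k, (‖y k‖ ^ a + ‖y k‖ ^ b) := by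
  refine (norm_pairingPow_le_of_norm_le hc x y (ha.trans_le hw.1)).trans ?_
  gcongr with i _ k _ <;> exact Real.rpow_le_rpow_add_rpow (norm_nonneg _) ha hw.1 hw.2

lemma norm_pairingPow_le_of_isometry [DecidableEq ι] {U : Matrix κ ι ℂ} (hU : Uᴴ * U = 1)
    (x : ι → E) (y : κ → E) {w : ℂ} (hw : 0 < w.re) :
    ‖pairingPow U x y w‖ ≤ √(∑ i, (‖x i‖ ^ w.re) ^ 2) * √(∑ k, (‖y k‖ ^ w.re) ^ 2) := by
  refine (norm_pairingPow_le U x y hw).trans ?_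
  simpa only [norm_normPowSMul _ hw] using
    Matrix.sum_mul_norm_smulVec_le_of_isometry hU (fun i => normPowSMul w (x i))
      (fun k => ‖y k‖ ^ w.re)

theorem norm_sum_inner_smulVec_le_interp [DecidableEq ι] {U : Matrix κ ι ℂ} (hU : Uᴴ * U = 1)
    {c : ℝ} (hc : ∀ k i, ‖U k i‖ ≤ c) (hc0 : 0 ≤ c) {θ : ℝ} (hθ0 : 0 ≤ θ) (hθ1 : θ ≤ 1)
    (x : ι → E) (y : κ → E) :
    ‖∑ k, ⟪y k, U.smulVec x k⟫_ℂ‖ ≤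
      c ^ (1 - θ) *
        ((∑ i, ‖x i‖ ^ (2 / (2 - θ))) * ∑ k, ‖y k‖ ^ (2 / (2 - θ))) ^ ((2 - θ) / 2) := by
  have h2θ : 0 < 2 - θ := by linarith
  set X := ∑ i, ‖x i‖ ^ (2 / (2 - θ))
  set Y := ∑ k, ‖y k‖ ^ (2 / (2 - θ))
  have hX : 0 ≤ X := by positivity
  have hY : 0 ≤ Y := by positivity
  -- `w θ = 1`, and `re (w z)` is `2 / (2 - θ)` on `re z = 0` and `1 / (2 - θ)` on `re z = 1`
  set w : ℂ → ℂ := fun z => (2 - z) / (2 - θ)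
  have hw_re : ∀ z, (w z).re = (2 - z.re) / (2 - θ) := fun z => by
    rw [show w z = (2 - z) / ((2 - θ : ℝ) : ℂ) by simp [w], div_ofReal_re, sub_re, re_ofNat]
  have hw_pos : ∀ z, z.re ≤ 1 → 0 < (w z).re := fun z hz => by
    rw [hw_re]; exact div_pos (by linarith) h2θ
  have hsq : ∀ r : ℝ, 0 ≤ r → (r ^ (1 / (2 - θ))) ^ 2 = r ^ (2 / (2 - θ)) := fun r hr => by
    rw [← Real.rpow_natCast, ← Real.rpow_mul hr]; ring_nf
  have edge₀ : ∀ z ∈ re ⁻¹' {0}, ‖pairingPow U x y (w z)‖ ≤ c * X * Y := fun z (hz : z.re = 0) => by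
    have h := norm_pairingPow_le_of_norm_le hc x y (hw_pos z (by linarith))
    rwa [hw_re, hz, sub_zero] at h
  have edge₁ : ∀ z ∈ re ⁻¹' {1}, ‖pairingPow U x y (w z)‖ ≤ √X * √Y := fun z (hz : z.re = 1) => by
    have h := norm_pairingPow_le_of_isometry hU x y (hw_pos z hz.le)
    rw [hw_re, hz, show (2 : ℝ) - 1 = 1 by norm_num] at h
    simpa only [hsq _ (norm_nonneg _)] using h
  have hbdd : BddAbove ((norm ∘ fun z => pairingPow U x y (w z)) '' verticalClosedStrip 0 1) := by
    refine ⟨c * (∑ i, (‖x i‖ ^ (1 / (2 - θ)) + ‖x i‖ ^ (2 / (2 - θ)))) *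
      ∑ k, (‖y k‖ ^ (1 / (2 - θ)) + ‖y k‖ ^ (2 / (2 - θ))), ?_⟩
    rintro _ ⟨z, ⟨hz0, hz1⟩, rfl⟩
    refine norm_pairingPow_le_of_re_mem_Icc hc hc0 x y (by positivity) ?_
    rw [hw_re]
    constructor <;> gcongr <;> linarith
  have h3 := norm_le_interp_of_mem_verticalClosedStrip₀₁' (fun z => pairingPow U x y (w z))
    (z := θ) (by simp [verticalClosedStrip, hθ0, hθ1])
    ((differentiable_pairingPow U x y).comp (by fun_prop)).diffContOnCl hbdd edge₀ edge₁
  have hwθ : w θ = 1 := div_self (by exact_mod_cast h2θ.ne')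
  rw [hwθ, pairingPow_one, ofReal_re] at h3
  refine h3.trans_eq ?_
  rw [← Real.sqrt_mul hX, Real.sqrt_eq_rpow, mul_assoc, Real.mul_rpow hc0 (by positivity),
    ← Real.rpow_mul (by positivity), mul_assoc, ← Real.rpow_add' (by positivity) (by linarith)]
  ring_nf

lemma inner_normPowSMul_self (v : E) {r : ℝ} (hr : 0 < r) :
    ⟪normPowSMul r v, v⟫_ℂ = ((‖v‖ ^ (r + 1) : ℝ) : ℂ) := by
  rcases (norm_nonneg v).eq_or_lt with hv | hv
  · rw [← hv, Real.zero_rpow (by linarith), norm_eq_zero.mp hv.symm]; simp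
  · have hexp : exp (((r : ℂ) - 1) * Real.log ‖v‖) = ((‖v‖ ^ (r - 1) : ℝ) : ℂ) := by
      rw [Real.rpow_def_of_pos hv, ofReal_exp]; push_cast; ring_nf
    rw [normPowSMul, hexp, inner_smul_left, conj_ofReal, inner_self_eq_norm_sq_to_K]
    have hpow : ‖v‖ ^ (r - 1) * ‖v‖ ^ 2 = ‖v‖ ^ (r + 1) := by
      rw [← Real.rpow_natCast, ← Real.rpow_add hv]; ring_nf
    rw [RCLike.ofReal_eq_complex_ofReal]
    exact_mod_cast hpow

lemma Real.rpow_one_sub_le_of_le_mul_rpow {Q K a : ℝ} (hQ : 0 ≤ Q) (hK : 0 ≤ K) (ha : a < 1)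
    (h : Q ≤ K * Q ^ a) : Q ^ (1 - a) ≤ K := by
  rcases hQ.eq_or_lt with rfl | hQ
  · rwa [Real.zero_rpow (by linarith)]
  · rwa [Real.rpow_sub hQ, Real.rpow_one, div_le_iff₀ (by positivity)]

theorem sum_rpow_norm_smulVec_le [DecidableEq ι] {U : Matrix κ ι ℂ} (hU : Uᴴ * U = 1)
    {c : ℝ} (hc : ∀ k i, ‖U k i‖ ≤ c) (hc0 : 0 ≤ c) {θ : ℝ} (hθ0 : 0 < θ) (hθ1 : θ ≤ 1)
    (x : ι → E) :
    (∑ k, ‖U.smulVec x k‖ ^ (2 / θ)) ^ (θ / 2) ≤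
      c ^ (1 - θ) * (∑ i, ‖x i‖ ^ (2 / (2 - θ))) ^ ((2 - θ) / 2) := by
  have h2θ : 0 < 2 - θ := by linarith
  have ht : 0 < 2 / θ - 1 := by rw [sub_pos, one_lt_div hθ0]; linarith
  -- test against the extremal dual family `y k = ‖U.smulVec x k‖ ^ (2 / θ - 2) • U.smulVec x k`
  set y : κ → E := fun k => normPowSMul ((2 / θ - 1 : ℝ) : ℂ) (U.smulVec x k)
  have hy : ∀ k, ‖y k‖ ^ (2 / (2 - θ)) = ‖U.smulVec x k‖ ^ (2 / θ) := fun k => by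
    rw [norm_normPowSMul _ (by simpa using ht), ofReal_re, ← Real.rpow_mul (norm_nonneg _)]
    congr 1; field_simp
  have hpair : ∑ k, ⟪y k, U.smulVec x k⟫_ℂ = ((∑ k, ‖U.smulVec x k‖ ^ (2 / θ) : ℝ) : ℂ) := by
    push_cast
    exact sum_congr rfl fun k _ => by rw [inner_normPowSMul_self _ ht, sub_add_cancel]
  have h := norm_sum_inner_smulVec_le_interp hU hc hc0 hθ0.le hθ1 x y
  rw [hpair, norm_real, Real.norm_of_nonneg (by positivity), sum_congr rfl fun k _ => hy k,
    Real.mul_rpow (by positivity) (by positivity), ← mul_assoc] at h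
  convert Real.rpow_one_sub_le_of_le_mul_rpow (by positivity) (by positivity) (by linarith) h
    using 2
  ring

end Interpolation

section Renyi

open Real

variable {ι κ : Type} [Fintype ι] [Fintype κ]

lemma ENNReal.exists_eq_inv_ofReal_of_inv_add_inv {α β : ℝ≥0∞} (hdual : 1 / α + 1 / β = 2)
    (hα : α ≤ 1) : ∃ θ ∈ Set.Icc (0 : ℝ) 1, α = (ENNReal.ofReal (2 - θ))⁻¹ ∧
      β = (ENNReal.ofReal θ)⁻¹ := by
  simp only [one_div] at hdual
  have hβ1 : β⁻¹ ≤ 1 := by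
    have : 1 + β⁻¹ ≤ 1 + 1 := by
      rw [one_add_one_eq_two, ← hdual]; gcongr; exact ENNReal.one_le_inv.mpr hα
    exact (ENNReal.add_le_add_iff_left ENNReal.one_ne_top).mp this
  have hβtop : β⁻¹ ≠ ⊤ := ne_top_of_le_ne_top ENNReal.one_ne_top hβ1
  refine ⟨β⁻¹.toReal, ⟨ENNReal.toReal_nonneg, ENNReal.toReal_le_of_le_ofReal zero_le_one
    (by simpa using hβ1)⟩, ?_, by rw [ENNReal.ofReal_toReal hβtop, inv_inv]⟩
  rw [← inv_inv α, ENNReal.eq_sub_of_add_eq hβtop hdual,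
    ENNReal.ofReal_sub _ ENNReal.toReal_nonneg, ENNReal.ofReal_toReal hβtop, ENNReal.ofReal_ofNat]

lemma ENNReal.le_one_of_inv_add_inv {α β : ℝ≥0∞} (hdual : 1 / α + 1 / β = 2) (hα : 1 ≤ α) :
    β ≤ 1 := by
  simp only [one_div] at hdual
  rw [← ENNReal.one_le_inv]
  refine (ENNReal.add_le_add_iff_left ENNReal.one_ne_top).mp ?_
  rw [one_add_one_eq_two, ← hdual]
  gcongr
  exact ENNReal.inv_le_one.mpr hα

lemma renyiEntropy_inv_ofReal {a : ℝ} (ha : 0 < a) (ha1 : a ≠ 1) (p : ι → ℝ) :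
    renyiEntropy (ENNReal.ofReal a)⁻¹ p = (1 - a⁻¹)⁻¹ * log (∑ j, p j ^ a⁻¹) := by
  have htop : (ENNReal.ofReal a)⁻¹ ≠ ⊤ := by simpa using ha
  have hone : (ENNReal.ofReal a)⁻¹ ≠ 1 := by
    rwa [ne_eq, ENNReal.inv_eq_one, ENNReal.ofReal_eq_one]
  rw [renyiEntropy, if_neg htop, if_neg hone, ENNReal.toReal_inv, ENNReal.toReal_ofReal ha.le]

lemma exists_pos_of_sum_eq_one {p : ι → ℝ} (hp1 : ∑ i, p i = 1) : ∃ i, 0 < p i := by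
  obtain ⟨i, -, hi⟩ := exists_lt_of_sum_lt (s := univ) (f := 0) (g := p) (by simp [hp1])
  exact ⟨i, hi⟩

lemma sum_rpow_pos {p : ι → ℝ} (hp : 0 ≤ p) (hp1 : ∑ i, p i = 1) (a : ℝ) :
    0 < ∑ i, p i ^ a := by
  obtain ⟨i, hi⟩ := exists_pos_of_sum_eq_one hp1
  exact sum_pos' (fun j _ => rpow_nonneg (hp j) a) ⟨i, mem_univ i, rpow_pos_of_pos hi a⟩

lemma neg_log_sq_le_renyi_add_renyi_of_rpow_le {p : ι → ℝ} {q : κ → ℝ} (hp : 0 ≤ p) (hq : 0 ≤ q)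
    (hp1 : ∑ i, p i = 1) (hq1 : ∑ k, q k = 1) {c θ : ℝ} (hc : 0 < c) (hθ0 : 0 < θ) (hθ1 : θ < 1)
    (hpq : (∑ k, q k ^ θ⁻¹) ^ (θ / 2) ≤ c ^ (1 - θ) * (∑ i, p i ^ (2 - θ)⁻¹) ^ ((2 - θ) / 2)) :
    -log (c ^ 2) ≤ (1 - (2 - θ)⁻¹)⁻¹ * log (∑ i, p i ^ (2 - θ)⁻¹) +
      (1 - θ⁻¹)⁻¹ * log (∑ k, q k ^ θ⁻¹) := by
  have hP := sum_rpow_pos hp hp1 (2 - θ)⁻¹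
  have hQ := sum_rpow_pos hq hq1 θ⁻¹
  have hlog := log_le_log (by positivity) hpq
  rw [log_rpow hQ, log_mul (by positivity) (by positivity), log_rpow hc, log_rpow hP] at hlog
  have h2θ : 0 < 2 - θ := by linarith
  have h1θ : 0 < 1 - θ := by linarith
  have hαcoeff : (1 - (2 - θ)⁻¹)⁻¹ = (2 - θ) / (1 - θ) := by
    rw [inv_eq_iff_eq_inv, inv_div]; field_simp; ring
  have hβcoeff : (1 - θ⁻¹)⁻¹ = -θ / (1 - θ) := by
    rw [inv_eq_iff_eq_inv, inv_div]; field_simp; ring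
  rw [hαcoeff, hβcoeff, div_mul_eq_mul_div, div_mul_eq_mul_div, ← add_div, le_div_iff₀ h1θ, log_pow]
  push_cast
  linarith

lemma neg_log_sq_le_renyi_half_add_minEntropy {p : ι → ℝ} {q : κ → ℝ} (hp : 0 ≤ p)
    (hp1 : ∑ i, p i = 1) (hq1 : ∑ k, q k = 1) {c : ℝ} (hc : 0 < c)
    (hpq : ∀ k, q k ≤ (c * ∑ i, p i ^ (2⁻¹ : ℝ)) ^ 2) :
    -log (c ^ 2) ≤ (1 - 2⁻¹)⁻¹ * log (∑ i, p i ^ (2⁻¹ : ℝ)) + -log (sSup (Set.range q)) := by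
  obtain ⟨k, hk⟩ := exists_pos_of_sum_eq_one hq1
  have hS : 0 < ∑ i, p i ^ (2⁻¹ : ℝ) := sum_rpow_pos hp hp1 _
  have hsup : sSup (Set.range q) ≤ (c * ∑ i, p i ^ (2⁻¹ : ℝ)) ^ 2 :=
    csSup_le (Set.range_nonempty_iff_nonempty.mpr ⟨k⟩) (Set.forall_mem_range.mpr hpq)
  have hsup_pos : 0 < sSup (Set.range q) :=
    hk.trans_le (le_csSup (Set.finite_range q).bddAbove ⟨k, rfl⟩)
  have hlog := log_le_log hsup_pos hsup
  rw [log_pow, log_mul hc.ne' hS.ne'] at hlog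
  rw [log_pow]
  norm_num at hlog ⊢
  linarith

lemma hasDerivAt_rpow_const_one {r : ℝ} (hr : 0 ≤ r) :
    HasDerivAt (fun a : ℝ => r ^ a) (r * log r) 1 := by
  rcases hr.eq_or_lt with rfl | hr
  · refine (hasDerivAt_const (1 : ℝ) (0 : ℝ)).congr_of_eventuallyEq ?_ |>.congr_deriv (by simp)
    filter_upwards [lt_mem_nhds one_pos] with a ha
    exact zero_rpow ha.ne'
  · simpa using (hasStrictDerivAt_const_rpow hr 1).hasDerivAt

lemma tendsto_renyi_shannon {p : ι → ℝ} (hp : 0 ≤ p) (hp1 : ∑ i, p i = 1) :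
    Tendsto (fun a : ℝ => (1 - a)⁻¹ * log (∑ i, p i ^ a)) (𝓝[≠] 1)
      (𝓝 (-∑ i, p i * log (p i))) := by
  have hderiv : HasDerivAt (fun a : ℝ => log (∑ i, p i ^ a)) (∑ i, p i * log (p i)) 1 := by
    have hsum : HasDerivAt (fun a : ℝ => ∑ i, p i ^ a) (∑ i, p i * log (p i)) 1 :=
      HasDerivAt.fun_sum fun i _ => hasDerivAt_rpow_const_one (hp i)
    simpa [hp1] using hsum.log (by simp [hp1])
  refine (hasDerivAt_iff_tendsto_slope.mp hderiv).neg.congr fun a => ?_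
  simp only [slope_def_field, rpow_one, hp1, log_one, sub_zero]
  rw [← neg_sub, div_neg, neg_neg, div_eq_inv_mul]

lemma neg_log_sq_le_shannon_add_shannon {p : ι → ℝ} {q : κ → ℝ} (hp : 0 ≤ p) (hq : 0 ≤ q)
    (hp1 : ∑ i, p i = 1) (hq1 : ∑ k, q k = 1) {c : ℝ}
    (h : ∀ θ ∈ Set.Ioo (0 : ℝ) 1, -log (c ^ 2) ≤ (1 - (2 - θ)⁻¹)⁻¹ * log (∑ i, p i ^ (2 - θ)⁻¹) +
      (1 - θ⁻¹)⁻¹ * log (∑ k, q k ^ θ⁻¹)) :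
    -log (c ^ 2) ≤ -∑ i, p i * log (p i) + -∑ k, q k * log (q k) := by
  have hIoo : Set.Ioo (0 : ℝ) 1 ∈ 𝓝[<] 1 := Ioo_mem_nhdsLT one_pos
  have h₁ : Tendsto (fun θ : ℝ => (2 - θ)⁻¹) (𝓝[<] 1) (𝓝[≠] 1) := by
    refine tendsto_nhdsWithin_iff.mpr ⟨?_, ?_⟩
    · have : ContinuousAt (fun θ : ℝ => (2 - θ)⁻¹) 1 := by fun_prop (disch := norm_num)
      simpa [show (2 : ℝ) - 1 = 1 by norm_num] using
        this.tendsto.mono_left (nhdsWithin_le_nhds (s := Set.Iio 1))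
    · filter_upwards [hIoo] with θ ⟨_, hθ1⟩
      exact (inv_lt_one_of_one_lt₀ (by linarith)).ne
  have h₂ : Tendsto (fun θ : ℝ => θ⁻¹) (𝓝[<] 1) (𝓝[≠] 1) := by
    refine tendsto_nhdsWithin_iff.mpr ⟨?_, ?_⟩
    · simpa using (continuousAt_inv₀ (one_ne_zero (α := ℝ))).tendsto.mono_left
        (nhdsWithin_le_nhds (s := Set.Iio 1))
    · filter_upwards [hIoo] with θ ⟨hθ0, hθ1⟩
      exact (one_lt_inv₀ hθ0 |>.mpr hθ1).ne'
  exact ge_of_tendsto (((tendsto_renyi_shannon hp hp1).comp h₁).add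
    ((tendsto_renyi_shannon hq hq1).comp h₂)) (eventually_of_mem hIoo h)

end Renyi

section Uncertainty

open Real

variable {ι κ : Type} [Fintype ι] [Fintype κ] {E : Type*} [NormedAddCommGroup E]
  [InnerProductSpace ℂ E]

theorem neg_log_sq_le_renyi_add_renyi_of_le_one [DecidableEq ι] {U : Matrix κ ι ℂ} (hU : Uᴴ * U = 1)
    {c : ℝ} (hc : ∀ k i, ‖U k i‖ ≤ c) {x : ι → E} (hx : ∑ i, ‖x i‖ ^ 2 = 1) {α β : ℝ≥0∞}
    (hdual : 1 / α + 1 / β = 2) (hα : α ≤ 1) :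
    -log (c ^ 2) ≤
      renyiEntropy α (fun i => ‖x i‖ ^ 2) + renyiEntropy β (fun k => ‖U.smulVec x k‖ ^ 2) := by
  have hp : 0 ≤ fun i => ‖x i‖ ^ 2 := fun i => by positivity
  have hq : 0 ≤ fun k => ‖U.smulVec x k‖ ^ 2 := fun k => by positivity
  have hq1 : ∑ k, ‖U.smulVec x k‖ ^ 2 = 1 := (Matrix.sum_norm_smulVec_sq hU x).trans hx
  have hc0 : 0 < c := by
    obtain ⟨k, hk⟩ := exists_pos_of_sum_eq_one hq1
    have hk' : 0 < ‖U.smulVec x k‖ := by nlinarith [norm_nonneg (U.smulVec x k)]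
    exact pos_of_mul_pos_left (hk'.trans_le (Matrix.norm_smulVec_le hc x k)) (by positivity)
  have hsq : ∀ r a : ℝ, 0 ≤ r → (r ^ 2) ^ a⁻¹ = r ^ (2 / a) := fun r a hr => by
    rw [← rpow_natCast, ← rpow_mul hr, Nat.cast_ofNat, div_eq_mul_inv]
  have hmid : ∀ θ ∈ Set.Ioo (0 : ℝ) 1, -log (c ^ 2) ≤
      (1 - (2 - θ)⁻¹)⁻¹ * log (∑ i, (‖x i‖ ^ 2) ^ (2 - θ)⁻¹) +
        (1 - θ⁻¹)⁻¹ * log (∑ k, (‖U.smulVec x k‖ ^ 2) ^ θ⁻¹) := fun θ ⟨hθ0, hθ1⟩ => by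
    refine neg_log_sq_le_renyi_add_renyi_of_rpow_le hp hq hx hq1 hc0 hθ0 hθ1 ?_
    simp only [hsq _ _ (norm_nonneg _)]
    exact sum_rpow_norm_smulVec_le hU hc hc0.le hθ0 hθ1.le x
  obtain ⟨θ, ⟨hθ0, hθ1⟩, rfl, rfl⟩ := ENNReal.exists_eq_inv_ofReal_of_inv_add_inv hdual hα
  rcases hθ0.eq_or_lt with rfl | hθ0
  · rw [sub_zero, renyiEntropy_inv_ofReal two_pos (by norm_num), ENNReal.ofReal_zero,
      ENNReal.inv_zero, renyiEntropy, if_pos rfl]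
    refine neg_log_sq_le_renyi_half_add_minEntropy hp hx hq1 hc0 fun k => ?_
    simp only [← Nat.cast_ofNat (R := ℝ), pow_rpow_inv_natCast (norm_nonneg _) two_ne_zero]
    exact pow_le_pow_left₀ (norm_nonneg _) (Matrix.norm_smulVec_le hc x k) 2
  rcases hθ1.eq_or_lt with rfl | hθ1
  · rw [show (2 : ℝ) - 1 = 1 by norm_num, ENNReal.ofReal_one, inv_one, renyiEntropy,
      if_neg ENNReal.one_ne_top, if_pos rfl, renyiEntropy, if_neg ENNReal.one_ne_top, if_pos rfl]
    exact neg_log_sq_le_shannon_add_shannon hp hq hx hq1 hmid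
  · rw [renyiEntropy_inv_ofReal (by linarith) (by linarith), renyiEntropy_inv_ofReal hθ0 hθ1.ne]
    exact hmid θ ⟨hθ0, hθ1⟩

theorem neg_log_sq_le_renyi_add_renyi [DecidableEq ι] {U : Matrix ι ι ℂ}
    (hU : U ∈ unitaryGroup ι ℂ) {c : ℝ} (hc : ∀ k i, ‖U k i‖ ≤ c) {x : ι → E}
    (hx : ∑ i, ‖x i‖ ^ 2 = 1) {α β : ℝ≥0∞} (hdual : 1 / α + 1 / β = 2) :
    -log (c ^ 2) ≤
      renyiEntropy α (fun i => ‖x i‖ ^ 2) + renyiEntropy β (fun k => ‖U.smulVec x k‖ ^ 2) := by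
  have hUU : Uᴴ * U = 1 := mem_unitaryGroup_iff'.mp hU
  rcases le_total α 1 with hα | hα
  · exact neg_log_sq_le_renyi_add_renyi_of_le_one hUU hc hx hdual hα
  · have hU' : Uᴴᴴ * Uᴴ = 1 := by
      rw [conjTranspose_conjTranspose]; exact mem_unitaryGroup_iff.mp hU
    have h := neg_log_sq_le_renyi_add_renyi_of_le_one hU' (fun k i => by simpa using hc i k)
      ((Matrix.sum_norm_smulVec_sq hUU x).trans hx) (by rwa [add_comm])
      (ENNReal.le_one_of_inv_add_inv hdual hα)
    rwa [Matrix.smulVec_smulVec, hUU, Matrix.one_smulVec, add_comm] at h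

end Uncertainty

namespace Matrix

variable {l m n : Type*} [Fintype n]

lemma re_mul_conjTranspose_self_apply_self (M : Matrix m n ℂ) (i : m) :
    ((M * Mᴴ) i i).re = ‖WithLp.toLp 2 (M i)‖ ^ 2 := by
  simp [mul_apply, EuclideanSpace.norm_sq_eq, ← Complex.normSq_eq_norm_sq, Complex.mul_conj]

lemma smulVec_toLp [Fintype m] (U : Matrix l m ℂ) (S : Matrix m n ℂ) :
    U.smulVec (fun i => WithLp.toLp 2 (S i)) = fun k => WithLp.toLp 2 ((U * S) k) := by
  ext k j
  simp [smulVec, mul_apply]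

open scoped MatrixOrder in
lemma PosSemidef.exists_eq_mul_conjTranspose [DecidableEq n] {ρ : Matrix n n ℂ}
    (hρ : ρ.PosSemidef) : ∃ S : Matrix n n ℂ, ρ = S * Sᴴ :=
  CStarAlgebra.nonneg_iff_eq_mul_star_self.mp hρ.nonneg

end Matrix

theorem maassen_uffink_general (d : ℕ)
    (U : Matrix (Fin d) (Fin d) ℂ) (hU : U ∈ Matrix.unitaryGroup (Fin d) ℂ)
    (c : ℝ)
    (hc : IsGreatest (Set.range fun ki : Fin d × Fin d => ‖U ki.1 ki.2‖) c)
    (α β : ℝ≥0∞)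
    (hdual : 1 / α + 1 / β = 2)
    (ρ : Matrix (Fin d) (Fin d) ℂ) (hρ : ρ.PosSemidef) (htr : ρ.trace = 1) :
    renyiEntropy α (fun i => (ρ i i).re) +
      renyiEntropy β (fun k => ((U * ρ * Uᴴ) k k).re) ≥ - Real.log (c ^ 2) := by
  obtain ⟨S, rfl⟩ := hρ.exists_eq_mul_conjTranspose
  set x : Fin d → EuclideanSpace ℂ (Fin d) := fun i => WithLp.toLp 2 (S i)
  have hp : (fun i => ((S * Sᴴ) i i).re) = fun i => ‖x i‖ ^ 2 :=
    funext (S.re_mul_conjTranspose_self_apply_self ·)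
  have hq : (fun k => ((U * (S * Sᴴ) * Uᴴ) k k).re) = fun k => ‖U.smulVec x k‖ ^ 2 := by
    rw [Matrix.smulVec_toLp, ← Matrix.mul_assoc, Matrix.mul_assoc _ _ Uᴴ, ← conjTranspose_mul]
    exact funext ((U * S).re_mul_conjTranspose_self_apply_self ·)
  have hx : ∑ i, ‖x i‖ ^ 2 = 1 := by
    simpa [trace, ← congrFun hp] using congrArg Complex.re htr
  rw [hp, hq, ge_iff_le]
  exact neg_log_sq_le_renyi_add_renyi hU (fun k i => hc.2 ⟨(k, i), rfl⟩) hx hdual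

/-- Maassen–Uffink uncertainty relation: for any unitary `U` with maximal entry
modulus `c`, any dual pair `(α, β)` (i.e. `α, β ∈ [1/2, ∞]` with `1/α + 1/β = 2`)
and any density matrix `ρ`, one has `H_α(p^ρ) + H_β(q^ρ) ≥ -log c²`. -/
theorem maassen_uffink (d : ℕ) (hd : 1 ≤ d)
    (U : Matrix (Fin d) (Fin d) ℂ) (hU : U ∈ Matrix.unitaryGroup (Fin d) ℂ)
    (c : ℝ)
    (hc : IsGreatest (Set.range fun ki : Fin d × Fin d => ‖U ki.1 ki.2‖) c)
    (α β : ℝ≥0∞) (hα : (2 : ℝ≥0∞)⁻¹ ≤ α) (hβ : (2 : ℝ≥0∞)⁻¹ ≤ β)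
    (hdual : 1 / α + 1 / β = 2)
    (ρ : Matrix (Fin d) (Fin d) ℂ) (hρ : ρ.PosSemidef) (htr : ρ.trace = 1) :
    renyiEntropy α (fun i => (ρ i i).re) +
      renyiEntropy β (fun k => ((U * ρ * Uᴴ) k k).re) ≥ - Real.log (c ^ 2) :=
  maassen_uffink_general d U hU c hc α β hdual ρ hρ htr
end

section
/- Let U be a unitary d×d complex matrix with c = max_{k,i} |U_{ki}|, and let ψ ∈ ℂ^d be a unit vector with supports s_X = {i : ψ_i ≠ 0} and s_Y = {k : (Uψ)_k ≠ 0} such that |ψ_i|² = 1/|s_X| for all i ∈ s_X, |(Uψ)_k|² = 1/|s_Y| for all k ∈ s_Y, and |s_X| · |s_Y| = 1/c². Then for every dual pair (α, β) (α, β ∈ [1/2, ∞], 1/α + 1/β = 2) one has H_α(p^ψ) + H_β(q^ψ) = -log(c²); in fact H_α(p^ψ) = log|s_X| and H_β(q^ψ) = log|s_Y|. -/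
open Matrix
open scoped ENNReal

/-!
Call a vector *flat* when it takes the single value `1 / n` on its support, of size `n`.
A flat vector with nonempty support has Rényi entropy `log n` of every positive order.
Unitarity keeps `Uψ` nonzero, so both `p^ψ` and `q^ψ` are flat with nonempty support, and
`log |s_X| + log |s_Y| = log (1 / c²)`.
-/

section Flat

variable {ι : Type} {p : ι → ℝ}

theorem sum_comp_of_flat [Fintype ι] (f : ℝ → ℝ) (hf : f 0 = 0)
    (hflat : ∀ j, p j ≠ 0 → p j = 1 / ({j' | p j' ≠ 0}.ncard : ℝ)) :
    ∑ j, f (p j) = {j' | p j' ≠ 0}.ncard * f (1 / {j' | p j' ≠ 0}.ncard) := by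
  classical
  calc ∑ j, f (p j)
      = ∑ j, if p j ≠ 0 then f (1 / {j' | p j' ≠ 0}.ncard) else 0 :=
        Finset.sum_congr rfl fun j _ => by
          by_cases hj : p j = 0
          · simp [hj, hf]
          · simp [hj, ← hflat j hj]
    _ = {j' | p j' ≠ 0}.ncard * f (1 / {j' | p j' ≠ 0}.ncard) := by
        rw [Finset.sum_ite, Finset.sum_const_zero, add_zero, Finset.sum_const, nsmul_eq_mul,
          Set.ncard_eq_toFinset_card', Set.toFinset_ofPred]

theorem sSup_range_of_flat (hne : ∃ j, p j ≠ 0)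
    (hflat : ∀ j, p j ≠ 0 → p j = 1 / ({j' | p j' ≠ 0}.ncard : ℝ)) :
    sSup (Set.range p) = 1 / {j' | p j' ≠ 0}.ncard := by
  obtain ⟨j₀, hj₀⟩ := hne
  refine IsGreatest.csSup_eq ⟨⟨j₀, hflat j₀ hj₀⟩, ?_⟩
  rintro _ ⟨j, rfl⟩
  by_cases hj : p j = 0
  · rw [hj]; positivity
  · rw [hflat j hj]

theorem renyiEntropy_of_flat [Fintype ι] {α : ℝ≥0∞} (hα : α ≠ 0) (hne : ∃ j, p j ≠ 0)
    (hflat : ∀ j, p j ≠ 0 → p j = 1 / ({j' | p j' ≠ 0}.ncard : ℝ)) :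
    renyiEntropy α p = Real.log ({j' | p j' ≠ 0}.ncard : ℝ) := by
  have hn : (0 : ℝ) < {j' | p j' ≠ 0}.ncard := by
    exact_mod_cast (Set.ncard_pos (Set.toFinite _)).mpr hne
  have log_one_div : Real.log (1 / {j' | p j' ≠ 0}.ncard) = -Real.log {j' | p j' ≠ 0}.ncard := by
    rw [one_div, Real.log_inv]
  unfold renyiEntropy
  split_ifs with htop hone
  · rw [sSup_range_of_flat hne hflat, log_one_div, neg_neg]
  · rw [sum_comp_of_flat (fun x => x * Real.log x) (by simp) hflat, log_one_div]
    field_simp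
  · set a := α.toReal
    have ha : a ≠ 0 := ENNReal.toReal_ne_zero.mpr ⟨hα, htop⟩
    have ha1 : 1 - a ≠ 0 := sub_ne_zero.mpr fun h =>
      hone ((ENNReal.toReal_eq_one_iff α).mp h.symm)
    rw [sum_comp_of_flat (· ^ a) (Real.zero_rpow ha) hflat,
      Real.log_mul hn.ne' (Real.rpow_pos_of_pos (by positivity) a).ne',
      Real.log_rpow (by positivity), log_one_div]
    field_simp
    ring

end Flat

theorem renyiEntropy_norm_sq_of_flat {ι E : Type} [Fintype ι] [NormedAddCommGroup E]
    {α : ℝ≥0∞} (hα : α ≠ 0) {v : ι → E} (hne : ∃ j, v j ≠ 0)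
    (hflat : ∀ j, v j ≠ 0 → ‖v j‖ ^ 2 = 1 / ({j' | v j' ≠ 0}.ncard : ℝ)) :
    renyiEntropy α (fun j => ‖v j‖ ^ 2) = Real.log ({j' | v j' ≠ 0}.ncard : ℝ) := by
  have hsupp : {j' | ‖v j'‖ ^ 2 ≠ 0} = {j' | v j' ≠ 0} := by simp
  have := renyiEntropy_of_flat hα (by simpa using hne)
    (fun j hj => hsupp ▸ hflat j (by simpa using hj))
  rwa [hsupp] at this

theorem exists_mulVec_ne_zero_of_mem_unitaryGroup {n : Type} [Fintype n] [DecidableEq n]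
    {U : Matrix n n ℂ} (hU : U ∈ unitaryGroup n ℂ) {ψ : n → ℂ} (hψ : ∃ i, ψ i ≠ 0) :
    ∃ k, (U *ᵥ ψ) k ≠ 0 := by
  by_contra! h
  obtain ⟨i, hi⟩ := hψ
  have hinv : star U *ᵥ (U *ᵥ ψ) = ψ := by
    rw [mulVec_mulVec, (mem_unitaryGroup_iff'.mp hU), one_mulVec]
  have hzero : U *ᵥ ψ = 0 := funext h
  exact hi (by rw [← hinv, hzero, mulVec_zero, Pi.zero_apply])

theorem flat_states_saturate_general (d : ℕ)
    (U : Matrix (Fin d) (Fin d) ℂ) (hU : U ∈ Matrix.unitaryGroup (Fin d) ℂ)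
    (c : ℝ)
    (ψ : Fin d → ℂ) (hψ : ∑ i, ‖ψ i‖ ^ 2 = 1)
    (hflatX : ∀ i, ψ i ≠ 0 →
        ‖ψ i‖ ^ 2 = 1 / ({i' | ψ i' ≠ 0}.ncard : ℝ))
    (hflatY : ∀ k, U.mulVec ψ k ≠ 0 →
        ‖U.mulVec ψ k‖ ^ 2 = 1 / ({k' | U.mulVec ψ k' ≠ 0}.ncard : ℝ))
    (hcard : (({i' | ψ i' ≠ 0}.ncard : ℝ) * ({k' | U.mulVec ψ k' ≠ 0}.ncard : ℝ))
        = 1 / c ^ 2) :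
    ∀ α β : ℝ≥0∞, (2 : ℝ≥0∞)⁻¹ ≤ α → (2 : ℝ≥0∞)⁻¹ ≤ β → 1 / α + 1 / β = 2 →
      renyiEntropy α (fun i => ‖ψ i‖ ^ 2)
          = Real.log ({i' | ψ i' ≠ 0}.ncard : ℝ) ∧
      renyiEntropy β (fun k => ‖U.mulVec ψ k‖ ^ 2)
          = Real.log ({k' | U.mulVec ψ k' ≠ 0}.ncard : ℝ) ∧
      renyiEntropy α (fun i => ‖ψ i‖ ^ 2) +
          renyiEntropy β (fun k => ‖U.mulVec ψ k‖ ^ 2)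
          = - Real.log (c ^ 2) := by
  intro α β hα hβ _
  have ne_zero_of_half_le {γ : ℝ≥0∞} (h : 2⁻¹ ≤ γ) : γ ≠ 0 :=
    (lt_of_lt_of_le (by simp) h).ne'
  have hψ₀ : ∃ i, ψ i ≠ 0 := by
    by_contra! h
    simp [h] at hψ
  have hUψ₀ := exists_mulVec_ne_zero_of_mem_unitaryGroup hU hψ₀
  have hX := renyiEntropy_norm_sq_of_flat (ne_zero_of_half_le hα) hψ₀ hflatX
  have hY := renyiEntropy_norm_sq_of_flat (ne_zero_of_half_le hβ) hUψ₀ hflatY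
  have hnX : (0 : ℝ) < {i' | ψ i' ≠ 0}.ncard := by
    exact_mod_cast (Set.ncard_pos (Set.toFinite _)).mpr hψ₀
  have hnY : (0 : ℝ) < {k' | U.mulVec ψ k' ≠ 0}.ncard := by
    exact_mod_cast (Set.ncard_pos (Set.toFinite _)).mpr hUψ₀
  refine ⟨hX, hY, ?_⟩
  rw [hX, hY, ← Real.log_mul hnX.ne' hnY.ne', hcard, one_div, Real.log_inv]

/-- A unit vector whose amplitudes are flat on the supports `s_X`, `s_Y` and whose
support sizes satisfy `|s_X|·|s_Y| = 1/c²` saturates the Maassen–Uffink bound for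
every dual pair `(α, β)`; in fact `H_α(p^ψ) = log |s_X|` and `H_β(q^ψ) = log |s_Y|`. -/
theorem flat_states_saturate (d : ℕ) (hd : 1 ≤ d)
    (U : Matrix (Fin d) (Fin d) ℂ) (hU : U ∈ Matrix.unitaryGroup (Fin d) ℂ)
    (c : ℝ)
    (hc : IsGreatest (Set.range fun ki : Fin d × Fin d => ‖U ki.1 ki.2‖) c)
    (ψ : Fin d → ℂ) (hψ : ∑ i, ‖ψ i‖ ^ 2 = 1)
    (hflatX : ∀ i, ψ i ≠ 0 →
        ‖ψ i‖ ^ 2 = 1 / ({i' | ψ i' ≠ 0}.ncard : ℝ))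
    (hflatY : ∀ k, U.mulVec ψ k ≠ 0 →
        ‖U.mulVec ψ k‖ ^ 2 = 1 / ({k' | U.mulVec ψ k' ≠ 0}.ncard : ℝ))
    (hcard : (({i' | ψ i' ≠ 0}.ncard : ℝ) * ({k' | U.mulVec ψ k' ≠ 0}.ncard : ℝ))
        = 1 / c ^ 2) :
    ∀ α β : ℝ≥0∞, (2 : ℝ≥0∞)⁻¹ ≤ α → (2 : ℝ≥0∞)⁻¹ ≤ β → 1 / α + 1 / β = 2 →
      renyiEntropy α (fun i => ‖ψ i‖ ^ 2)
          = Real.log ({i' | ψ i' ≠ 0}.ncard : ℝ) ∧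
      renyiEntropy β (fun k => ‖U.mulVec ψ k‖ ^ 2)
          = Real.log ({k' | U.mulVec ψ k' ≠ 0}.ncard : ℝ) ∧
      renyiEntropy α (fun i => ‖ψ i‖ ^ 2) +
          renyiEntropy β (fun k => ‖U.mulVec ψ k‖ ^ 2)
          = - Real.log (c ^ 2) :=
  flat_states_saturate_general d U hU c ψ hψ hflatX hflatY hcard
end

section
/- Let 1/2 < α ≤ 1 and β = α/(2α-1) (so 1/α + 1/β = 2). Let U be a unitary d×d complex matrix with c = max_{k,i} |U_{ki}| and let φ ∈ ℝ^d be a unit vector with φ_i ≥ 0 for all i such that the vector φ̂ = Uφ also has nonnegative real entries. Set λ = (‖φ^α‖₂ · ‖φ̂^β‖₂)^{-1}, where φ^α denotes the componentwise power and ‖·‖₂ the Euclidean norm, and define for complex z the function F(z) = c^{1-z} · λ^z · ∑_{i: φ_i > 0} ∑_{k: φ̂_k > 0} φ_i^{αz} · U_{ki} · φ̂_k^{βz}. Then |F(z)| ≤ 1 for every z ∈ ℂ with 1 ≤ Re(z) ≤ 2. -/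
/-!
Unless the double sum vanishes identically, `c > 0` and `λ > 0`, so `F` is entire and `‖F z‖` is
bounded by a continuous function of `Re z`; by Hadamard's three lines theorem it suffices to show
`‖F z‖ ≤ 1` on the two boundary lines. On `Re z = 1` the double sum is `⟨y, U x⟩` with
`|x i| = φ i ^ α` and `|y k| = φ̂ k ^ β`, so Cauchy–Schwarz and unitarity of `U` give
`‖F z‖ ≤ λ ‖φ^α‖₂ ‖φ̂^β‖₂ = 1`. On `Re z = 2` the entry bound `|U k i| ≤ c` gives
`‖F z‖ ≤ c⁻¹ λ² · c ‖φ^α‖₂² ‖φ̂^β‖₂² = 1`.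
-/

open Matrix Finset Complex

theorem Matrix.sum_norm_sq_mulVec_of_mem_unitaryGroup {n : Type*} [Fintype n] [DecidableEq n]
    {U : Matrix n n ℂ} (hU : U ∈ unitaryGroup n ℂ) (x : n → ℂ) :
    ∑ k, ‖(U *ᵥ x) k‖ ^ 2 = ∑ i, ‖x i‖ ^ 2 := by
  have h : star (U *ᵥ x) ⬝ᵥ (U *ᵥ x) = star x ⬝ᵥ x := by
    rw [star_mulVec, dotProduct_mulVec, vecMul_vecMul, ← star_eq_conjTranspose, hU.1,
      vecMul_one]
  have hsq : ∀ w : n → ℂ, star w ⬝ᵥ w = ((∑ i, ‖w i‖ ^ 2 : ℝ) : ℂ) := fun w => by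
    simp [dotProduct, Complex.conj_mul']
  exact_mod_cast (hsq _).symm.trans (h.trans (hsq x))

theorem Matrix.norm_sum_sum_mul_le_of_mem_unitaryGroup {n : Type*} [Fintype n] [DecidableEq n]
    {U : Matrix n n ℂ} (hU : U ∈ unitaryGroup n ℂ) (I K : Finset n) (x y : n → ℂ) :
    ‖∑ i ∈ I, ∑ k ∈ K, x i * U k i * y k‖ ≤
      √(∑ i ∈ I, ‖x i‖ ^ 2) * √(∑ k ∈ K, ‖y k‖ ^ 2) := by
  set xI : n → ℂ := fun i => if i ∈ I then x i else 0
  have hxI : ∑ i, ‖xI i‖ ^ 2 = ∑ i ∈ I, ‖x i‖ ^ 2 := by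
    simp [xI, apply_ite]
  have hsum : ∑ i ∈ I, ∑ k ∈ K, x i * U k i * y k = ∑ k ∈ K, (U *ᵥ xI) k * y k := by
    rw [sum_comm]
    refine sum_congr rfl fun k _ => ?_
    simp only [xI, mulVec, dotProduct, mul_ite, mul_zero, sum_ite_mem, univ_inter, sum_mul]
    exact sum_congr rfl fun i _ => by ring
  calc ‖∑ i ∈ I, ∑ k ∈ K, x i * U k i * y k‖
      ≤ ∑ k ∈ K, ‖(U *ᵥ xI) k‖ * ‖y k‖ := hsum ▸ norm_sum_le_of_le _ fun k _ => (norm_mul _ _).le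
    _ ≤ √(∑ k ∈ K, ‖(U *ᵥ xI) k‖ ^ 2) * √(∑ k ∈ K, ‖y k‖ ^ 2) :=
        Real.sum_mul_le_sqrt_mul_sqrt _ _ _
    _ ≤ √(∑ i ∈ I, ‖x i‖ ^ 2) * √(∑ k ∈ K, ‖y k‖ ^ 2) := by
        gcongr
        rw [← hxI, ← sum_norm_sq_mulVec_of_mem_unitaryGroup hU]
        exact sum_le_univ_sum_of_nonneg fun k => by positivity

theorem Matrix.norm_sum_sum_mul_le_of_norm_le {R ι κ : Type*} [SeminormedRing R]
    {U : Matrix κ ι R} {c : ℝ} (hUc : ∀ k i, ‖U k i‖ ≤ c) (I : Finset ι) (K : Finset κ)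
    (x : ι → R) (y : κ → R) :
    ‖∑ i ∈ I, ∑ k ∈ K, x i * U k i * y k‖ ≤ c * (∑ i ∈ I, ‖x i‖) * ∑ k ∈ K, ‖y k‖ := by
  calc ‖∑ i ∈ I, ∑ k ∈ K, x i * U k i * y k‖
      ≤ ∑ i ∈ I, ∑ k ∈ K, ‖x i‖ * c * ‖y k‖ := by
        refine norm_sum_le_of_le _ fun i _ => norm_sum_le_of_le _ fun k _ => ?_
        refine (norm_mul_le _ _).trans ?_
        gcongr
        exact (norm_mul_le _ _).trans (by gcongr; exact hUc k i)
    _ = c * (∑ i ∈ I, ‖x i‖) * ∑ k ∈ K, ‖y k‖ := by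
        rw [mul_assoc, sum_mul_sum, mul_sum]
        exact sum_congr rfl fun i _ => by rw [mul_sum]; exact sum_congr rfl fun k _ => by ring

theorem Complex.norm_ofReal_cpow_ofReal_mul {a : ℝ} (ha : 0 < a) (b : ℝ) (z : ℂ) :
    ‖(a : ℂ) ^ ((b : ℂ) * z)‖ = (a ^ b) ^ z.re := by
  rw [norm_cpow_eq_rpow_re_of_pos ha, re_ofReal_mul, Real.rpow_mul ha.le]

theorem Complex.norm_le_one_on_verticalClosedStrip_of_edges {f : ℂ → ℂ} {g : ℝ → ℝ} {l u : ℝ}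
    (hlu : l < u) (hf : Differentiable ℂ f) (hg : ContinuousOn g (Set.Icc l u))
    (hfg : ∀ z : ℂ, z.re ∈ Set.Icc l u → ‖f z‖ ≤ g z.re)
    (hl : ∀ z : ℂ, z.re = l → ‖f z‖ ≤ 1) (hu : ∀ z : ℂ, z.re = u → ‖f z‖ ≤ 1) {z : ℂ}
    (hz : z.re ∈ Set.Icc l u) : ‖f z‖ ≤ 1 := by
  obtain ⟨M, hM⟩ := isCompact_Icc.bddAbove_image hg
  have hB : BddAbove ((norm ∘ f) '' HadamardThreeLines.verticalClosedStrip l u) := by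
    refine ⟨M, ?_⟩
    rintro _ ⟨w, hw, rfl⟩
    exact (hfg w hw).trans (hM ⟨w.re, hw, rfl⟩)
  simpa using HadamardThreeLines.norm_le_interp_of_mem_verticalClosedStrip' hlu hz
    hf.diffContOnCl hB hl hu

theorem sum_rpow_sq_pos {ι : Type*} [Fintype ι] {a : ι → ℝ} (b : ℝ)
    (h : (univ.filter fun i => 0 < a i).Nonempty) :
    0 < ∑ i, (a i ^ b) ^ 2 :=
  (sum_pos (fun i hi => by have := (mem_filter.mp hi).2; positivity) h).trans_le
    (sum_le_univ_sum_of_nonneg fun _ => sq_nonneg _)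

theorem sum_filter_pos_norm_ofReal_cpow_sq_le {ι : Type*} [Fintype ι] {a : ι → ℝ} (b : ℝ) {z : ℂ}
    (hz : z.re = 1) :
    ∑ i ∈ univ.filter (fun i => 0 < a i), ‖(a i : ℂ) ^ ((b : ℂ) * z)‖ ^ 2 ≤ ∑ i, (a i ^ b) ^ 2 := by
  rw [sum_congr rfl fun i hi => by rw [norm_ofReal_cpow_ofReal_mul (mem_filter.mp hi).2, hz,
    Real.rpow_one]]
  exact sum_le_univ_sum_of_nonneg fun _ => sq_nonneg _

section MagicFunction

variable {ι κ : Type*} [Fintype ι] [Fintype κ]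

noncomputable def magicSum (U : Matrix κ ι ℂ) (α β : ℝ) (φ : ι → ℝ) (ψ : κ → ℝ) (z : ℂ) : ℂ :=
  ∑ i ∈ univ.filter (fun i => 0 < φ i), ∑ k ∈ univ.filter (fun k => 0 < ψ k),
    (φ i : ℂ) ^ ((α : ℂ) * z) * U k i * (ψ k : ℂ) ^ ((β : ℂ) * z)

noncomputable def magicConst (α β : ℝ) (φ : ι → ℝ) (ψ : κ → ℝ) : ℝ :=
  (√(∑ i, (φ i ^ α) ^ 2) * √(∑ k, (ψ k ^ β) ^ 2))⁻¹

noncomputable def magicFunction (U : Matrix κ ι ℂ) (c α β : ℝ) (φ : ι → ℝ) (ψ : κ → ℝ) (z : ℂ) :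
    ℂ :=
  (c : ℂ) ^ (1 - z) * (magicConst α β φ ψ : ℂ) ^ z * magicSum U α β φ ψ z

noncomputable def magicBound (c α β : ℝ) (φ : ι → ℝ) (ψ : κ → ℝ) (t : ℝ) : ℝ :=
  c ^ (1 - t) * magicConst α β φ ψ ^ t *
    (c * (∑ i ∈ univ.filter (fun i => 0 < φ i), (φ i ^ α) ^ t) *
      ∑ k ∈ univ.filter (fun k => 0 < ψ k), (ψ k ^ β) ^ t)

variable (U : Matrix κ ι ℂ) (α β : ℝ) (φ : ι → ℝ) (ψ : κ → ℝ)

theorem differentiable_magicSum : Differentiable ℂ (magicSum U α β φ ψ) := by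
  refine Differentiable.fun_sum fun i hi => Differentiable.fun_sum fun k hk => ?_
  have hφ : (φ i : ℂ) ≠ 0 := ofReal_ne_zero.mpr (mem_filter.mp hi).2.ne'
  have hψ : (ψ k : ℂ) ≠ 0 := ofReal_ne_zero.mpr (mem_filter.mp hk).2.ne'
  fun_prop (disch := simp [hφ, hψ])

theorem norm_magicSum_le {c : ℝ} (hUc : ∀ k i, ‖U k i‖ ≤ c) (z : ℂ) :
    ‖magicSum U α β φ ψ z‖ ≤ c * (∑ i ∈ univ.filter (fun i => 0 < φ i), (φ i ^ α) ^ z.re) *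
      ∑ k ∈ univ.filter (fun k => 0 < ψ k), (ψ k ^ β) ^ z.re := by
  refine (norm_sum_sum_mul_le_of_norm_le hUc _ _ _ _).trans_eq ?_
  rw [sum_congr rfl fun i hi => norm_ofReal_cpow_ofReal_mul (mem_filter.mp hi).2 α z,
    sum_congr rfl fun k hk => norm_ofReal_cpow_ofReal_mul (mem_filter.mp hk).2 β z]

theorem nonempty_and_pos_of_magicSum_ne_zero {c : ℝ} (hUc : ∀ k i, ‖U k i‖ ≤ c)
    (h : magicSum U α β φ ψ ≠ 0) :
    (univ.filter fun i => 0 < φ i).Nonempty ∧ (univ.filter fun k => 0 < ψ k).Nonempty ∧ 0 < c := by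
  contrapose! h
  funext z
  by_cases hI : (univ.filter fun i => 0 < φ i).Nonempty
  · by_cases hK : (univ.filter fun k => 0 < ψ k).Nonempty
    · have hU0 : U = 0 := ext fun k i => norm_le_zero_iff.mp ((hUc k i).trans (h hI hK))
      simp [magicSum, hU0]
    · simp [magicSum, not_nonempty_iff_eq_empty.mp hK]
  · simp [magicSum, not_nonempty_iff_eq_empty.mp hI]

theorem magicConst_pos (hI : (univ.filter fun i => 0 < φ i).Nonempty)
    (hK : (univ.filter fun k => 0 < ψ k).Nonempty) : 0 < magicConst α β φ ψ := by
  have := sum_rpow_sq_pos α hI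
  have := sum_rpow_sq_pos β hK
  unfold magicConst
  positivity

theorem differentiable_magicFunction {c : ℝ} (hc : c ≠ 0) (hlam : magicConst α β φ ψ ≠ 0) :
    Differentiable ℂ (magicFunction U c α β φ ψ) := by
  have hc' : (c : ℂ) ≠ 0 := ofReal_ne_zero.mpr hc
  have hlam' : (magicConst α β φ ψ : ℂ) ≠ 0 := ofReal_ne_zero.mpr hlam
  have := differentiable_magicSum U α β φ ψ
  unfold magicFunction
  fun_prop (disch := simp [hc', hlam'])

theorem norm_magicFunction {c : ℝ} (hc : 0 < c) (hlam : 0 < magicConst α β φ ψ) (z : ℂ) :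
    ‖magicFunction U c α β φ ψ z‖ =
      c ^ (1 - z.re) * magicConst α β φ ψ ^ z.re * ‖magicSum U α β φ ψ z‖ := by
  rw [magicFunction, norm_mul, norm_mul, norm_cpow_eq_rpow_re_of_pos hc,
    norm_cpow_eq_rpow_re_of_pos hlam, sub_re, one_re]

theorem norm_magicFunction_le_magicBound {c : ℝ} (hUc : ∀ k i, ‖U k i‖ ≤ c) (hc : 0 < c)
    (hlam : 0 < magicConst α β φ ψ) (z : ℂ) :
    ‖magicFunction U c α β φ ψ z‖ ≤ magicBound c α β φ ψ z.re := by
  rw [norm_magicFunction U α β φ ψ hc hlam]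
  exact mul_le_mul_of_nonneg_left (norm_magicSum_le U α β φ ψ hUc z) (by positivity)

theorem continuous_magicBound {c : ℝ} (hc : 0 < c) (hlam : 0 < magicConst α β φ ψ) :
    Continuous (magicBound c α β φ ψ) := by
  have hpow {a : ℝ} (ha : 0 < a) : Continuous fun t : ℝ => a ^ t :=
    Real.continuous_const_rpow ha.ne'
  refine ((hpow hc).comp (continuous_sub_left 1)).mul (hpow hlam) |>.mul <|
    (continuous_const.mul (continuous_finsetSum _ fun i hi => hpow ?_)).mul
      (continuous_finsetSum _ fun k hk => hpow ?_)
  · exact Real.rpow_pos_of_pos (mem_filter.mp hi).2 _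
  · exact Real.rpow_pos_of_pos (mem_filter.mp hk).2 _

theorem magicBound_two_le_one {c : ℝ} (hc : 0 < c) (hlam : 0 < magicConst α β φ ψ) :
    magicBound c α β φ ψ 2 ≤ 1 := by
  set A := ∑ i, (φ i ^ α) ^ 2
  set B := ∑ k, (ψ k ^ β) ^ 2
  have hA : 0 ≤ A := sum_nonneg fun _ _ => sq_nonneg _
  have hB : 0 ≤ B := sum_nonneg fun _ _ => sq_nonneg _
  have hAB : 0 < A * B := by
    have h : 0 < √A * √B := inv_pos.mp hlam
    rwa [← Real.sqrt_mul hA, Real.sqrt_pos] at h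
  have hlam2 : magicConst α β φ ψ ^ 2 = (A * B)⁻¹ := by
    rw [magicConst, inv_pow, mul_pow, Real.sq_sqrt hA, Real.sq_sqrt hB]
  unfold magicBound
  rw [show (1 - 2 : ℝ) = -1 by norm_num, Real.rpow_neg_one]
  simp only [Real.rpow_two, hlam2]
  calc c⁻¹ * (A * B)⁻¹ *
        (c * (∑ i ∈ univ.filter (fun i => 0 < φ i), (φ i ^ α) ^ 2) *
          ∑ k ∈ univ.filter (fun k => 0 < ψ k), (ψ k ^ β) ^ 2)
      ≤ c⁻¹ * (A * B)⁻¹ * (c * A * B) := by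
        gcongr <;> exact sum_le_univ_sum_of_nonneg fun _ => sq_nonneg _
    _ = (c⁻¹ * c) * ((A * B)⁻¹ * (A * B)) := by ring
    _ = 1 := by rw [inv_mul_cancel₀ hc.ne', inv_mul_cancel₀ hAB.ne', one_mul]

end MagicFunction

section Unitary

variable {ι : Type*} [Fintype ι] [DecidableEq ι] {U : Matrix ι ι ℂ} (α β : ℝ) (φ ψ : ι → ℝ)

theorem norm_magicSum_le_of_re_eq_one (hU : U ∈ unitaryGroup ι ℂ) {z : ℂ} (hz : z.re = 1) :
    ‖magicSum U α β φ ψ z‖ ≤ √(∑ i, (φ i ^ α) ^ 2) * √(∑ k, (ψ k ^ β) ^ 2) := by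
  refine (norm_sum_sum_mul_le_of_mem_unitaryGroup hU _ _ _ _).trans ?_
  gcongr <;> exact sum_filter_pos_norm_ofReal_cpow_sq_le _ hz

theorem norm_magicFunction_le_one_of_re_eq_one (hU : U ∈ unitaryGroup ι ℂ) {c : ℝ} (hc : 0 < c)
    (hlam : 0 < magicConst α β φ ψ) {z : ℂ} (hz : z.re = 1) :
    ‖magicFunction U c α β φ ψ z‖ ≤ 1 := by
  rw [norm_magicFunction U α β φ ψ hc hlam, hz, sub_self, Real.rpow_zero, Real.rpow_one, one_mul]
  calc magicConst α β φ ψ * ‖magicSum U α β φ ψ z‖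
      ≤ magicConst α β φ ψ * (√(∑ i, (φ i ^ α) ^ 2) * √(∑ k, (ψ k ^ β) ^ 2)) :=
        mul_le_mul_of_nonneg_left (norm_magicSum_le_of_re_eq_one α β φ ψ hU hz) hlam.le
    _ = 1 := inv_mul_cancel₀ (inv_pos.mp hlam).ne'

theorem norm_magicFunction_le_one (hU : U ∈ unitaryGroup ι ℂ) {c : ℝ} (hUc : ∀ k i, ‖U k i‖ ≤ c)
    {z : ℂ} (hz : z.re ∈ Set.Icc 1 2) : ‖magicFunction U c α β φ ψ z‖ ≤ 1 := by
  by_cases hS : magicSum U α β φ ψ = 0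
  · simp [magicFunction, hS]
  obtain ⟨hI, hK, hc⟩ := nonempty_and_pos_of_magicSum_ne_zero U α β φ ψ hUc hS
  have hlam := magicConst_pos α β φ ψ hI hK
  refine norm_le_one_on_verticalClosedStrip_of_edges one_lt_two
    (differentiable_magicFunction U α β φ ψ hc.ne' hlam.ne')
    (continuous_magicBound α β φ ψ hc hlam).continuousOn
    (fun w _ => norm_magicFunction_le_magicBound U α β φ ψ hUc hc hlam w)
    (fun w hw => norm_magicFunction_le_one_of_re_eq_one α β φ ψ hU hc hlam hw)
    (fun w hw => ?_) hz
  exact (norm_magicFunction_le_magicBound U α β φ ψ hUc hc hlam w).trans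
    (hw ▸ magicBound_two_le_one α β φ ψ hc hlam)

end Unitary

theorem magic_function_bounded_general (d : ℕ)
    (α β : ℝ)
    (U : Matrix (Fin d) (Fin d) ℂ) (hU : U ∈ Matrix.unitaryGroup (Fin d) ℂ)
    (c : ℝ)
    (hc : IsGreatest (Set.range fun ki : Fin d × Fin d => ‖U ki.1 ki.2‖) c)
    (φ : Fin d → ℝ)
    (φhat : Fin d → ℝ)
    (lam : ℝ)
    (hlam : lam = (Real.sqrt (∑ i, (φ i ^ α) ^ 2) *
        Real.sqrt (∑ k, (φhat k ^ β) ^ 2))⁻¹)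
    (F : ℂ → ℂ)
    (hF : ∀ z : ℂ, F z = (c : ℂ) ^ (1 - z) * (lam : ℂ) ^ z *
        ∑ i ∈ Finset.univ.filter (fun i => 0 < φ i),
          ∑ k ∈ Finset.univ.filter (fun k => 0 < φhat k),
            (φ i : ℂ) ^ ((α : ℂ) * z) * U k i * (φhat k : ℂ) ^ ((β : ℂ) * z)) :
    ∀ z : ℂ, 1 ≤ z.re → z.re ≤ 2 → ‖F z‖ ≤ 1 := by
  intro z hz1 hz2
  subst hlam
  rw [hF]
  exact norm_magicFunction_le_one α β φ φhat hU (fun k i => hc.2 ⟨(k, i), rfl⟩) ⟨hz1, hz2⟩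

/-- The "magic function" `F` built from a unit vector `φ` with nonnegative entries,
whose image `Uφ` also has nonnegative (real) entries, is bounded in modulus by `1`
on the strip `1 ≤ Re z ≤ 2`. Here `β = α/(2α-1)` is the dual parameter of
`α ∈ (1/2, 1]`, `c` is the maximal entry modulus of the unitary `U`, and
`λ = (‖φ^α‖₂ ‖φ̂^β‖₂)⁻¹`. -/
theorem magic_function_bounded (d : ℕ) (hd : 1 ≤ d)
    (α β : ℝ) (hα1 : 1 / 2 < α) (hα2 : α ≤ 1) (hβ : β = α / (2 * α - 1))
    (U : Matrix (Fin d) (Fin d) ℂ) (hU : U ∈ Matrix.unitaryGroup (Fin d) ℂ)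
    (c : ℝ)
    (hc : IsGreatest (Set.range fun ki : Fin d × Fin d => ‖U ki.1 ki.2‖) c)
    (φ : Fin d → ℝ) (hφnorm : ∑ i, φ i ^ 2 = 1) (hφnonneg : ∀ i, 0 ≤ φ i)
    (φhat : Fin d → ℝ) (hφhatnonneg : ∀ k, 0 ≤ φhat k)
    (hφhat : ∀ k, U.mulVec (fun i => (φ i : ℂ)) k = (φhat k : ℂ))
    (lam : ℝ)
    (hlam : lam = (Real.sqrt (∑ i, (φ i ^ α) ^ 2) *
        Real.sqrt (∑ k, (φhat k ^ β) ^ 2))⁻¹)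
    (F : ℂ → ℂ)
    (hF : ∀ z : ℂ, F z = (c : ℂ) ^ (1 - z) * (lam : ℂ) ^ z *
        ∑ i ∈ Finset.univ.filter (fun i => 0 < φ i),
          ∑ k ∈ Finset.univ.filter (fun k => 0 < φhat k),
            (φ i : ℂ) ^ ((α : ℂ) * z) * U k i * (φhat k : ℂ) ^ ((β : ℂ) * z)) :
    ∀ z : ℂ, 1 ≤ z.re → z.re ≤ 2 → ‖F z‖ ≤ 1 :=
  magic_function_bounded_general d α β U hU c hc φ φhat lam hlam F hF
end

section
/- For any three unit vectors Φ₁, Φ₂, Φ₃ ∈ ℂ², there exists a unit vector α ∈ ℂ² such that |⟨α, Φ₁⟩| = |⟨α, Φ₂⟩| = |⟨α, Φ₃⟩|, where ⟨·,·⟩ is the standard Hermitian inner product on ℂ². -/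
/-!
Identify a unit vector `a ∈ ℂ²` with its Bloch vector `b(a)` on the unit sphere of `ℝ³`. For unit
vectors `a, φ` one has `2 |⟨a, φ⟩|² = 1 + b(a) · b(φ)`, so `|⟨a, Φ₁⟩| = |⟨a, Φ₂⟩| = |⟨a, Φ₃⟩|`
says that `b(a)` is orthogonal to `b(Φ₁) - b(Φ₂)` and `b(Φ₂) - b(Φ₃)`. Two vectors of `ℝ³` always
have a common unit normal, and every point of the sphere is a Bloch vector.
-/

open Module ComplexConjugate
open scoped RealInnerProductSpace

theorem exists_norm_eq_one_forall_inner_eq_zero {𝕜 E : Type*} [RCLike 𝕜] [NormedAddCommGroup E]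
    [InnerProductSpace 𝕜 E] [FiniteDimensional 𝕜 E] (s : Finset E) (hs : s.card < finrank 𝕜 E) :
    ∃ n : E, ‖n‖ = 1 ∧ ∀ w ∈ s, inner 𝕜 n w = 0 := by
  have hspan : Submodule.span 𝕜 (s : Set E) ≠ ⊤ := by
    intro htop
    have := finrank_span_finset_le_card (R := 𝕜) s
    rw [Set.finrank, htop, finrank_top] at this
    omega
  obtain ⟨x, hx, hx0⟩ := Submodule.exists_mem_ne_zero_of_ne_bot
    (mt Submodule.orthogonal_eq_bot_iff.mp hspan)
  refine ⟨(‖x‖⁻¹ : 𝕜) • x, norm_smul_inv_norm hx0, fun w hw => ?_⟩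
  rw [inner_smul_left, Submodule.inner_left_of_mem_orthogonal (Submodule.subset_span hw) hx,
    mul_zero]

noncomputable def blochVector (v : Fin 2 → ℂ) : EuclideanSpace ℝ (Fin 3) :=
  !₂[‖v 0‖ ^ 2 - ‖v 1‖ ^ 2, 2 * (conj (v 0) * v 1).re, 2 * (conj (v 0) * v 1).im]

theorem two_mul_norm_sq_sum_conj_mul (a φ : Fin 2 → ℂ) :
    2 * ‖∑ i, conj (a i) * φ i‖ ^ 2 =
      (∑ i, ‖a i‖ ^ 2) * (∑ i, ‖φ i‖ ^ 2) + ⟪blochVector a, blochVector φ⟫ := by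
  simp only [blochVector, PiLp.inner_apply, Fin.sum_univ_two, Fin.sum_univ_three, Complex.sq_norm,
    Complex.normSq_apply, Complex.add_re, Complex.add_im, Complex.mul_re, Complex.mul_im,
    Complex.conj_re, Complex.conj_im, RCLike.inner_apply, conj_trivial, Fin.isValue,
    Matrix.cons_val_zero, Matrix.cons_val_one, Matrix.cons_val_two, Matrix.head_cons,
    Matrix.tail_cons]
  ring

theorem norm_sum_conj_mul_eq_sqrt {a φ : Fin 2 → ℂ} (ha : ∑ i, ‖a i‖ ^ 2 = 1)
    (hφ : ∑ i, ‖φ i‖ ^ 2 = 1) :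
    ‖∑ i, conj (a i) * φ i‖ = √((1 + ⟪blochVector a, blochVector φ⟫) / 2) := by
  have h := two_mul_norm_sq_sum_conj_mul a φ
  rw [ha, hφ, one_mul] at h
  rw [← h, mul_div_cancel_left₀ _ two_ne_zero, Real.sqrt_sq (norm_nonneg _)]

theorem exists_blochVector_eq (n : EuclideanSpace ℝ (Fin 3)) (hn : ‖n‖ = 1) :
    ∃ a : Fin 2 → ℂ, ∑ i, ‖a i‖ ^ 2 = 1 ∧ blochVector a = n := by
  have hn_sq : n 0 ^ 2 + n 1 ^ 2 + n 2 ^ 2 = 1 := by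
    simpa [Fin.sum_univ_three, hn] using (EuclideanSpace.real_norm_sq_eq n).symm
  rcases eq_or_ne (n 0) (-1) with hsouth | hsouth
  · have h₁ : n 1 = 0 := by nlinarith
    have h₂ : n 2 = 0 := by nlinarith
    refine ⟨![0, 1], by simp, ?_⟩
    ext i
    fin_cases i <;> simp [blochVector, hsouth, h₁, h₂]
  · have hpos : 0 < (1 + n 0) / 2 := by
      have : -1 < n 0 := lt_of_le_of_ne (by nlinarith) hsouth.symm
      linarith
    set r := √((1 + n 0) / 2)
    have hr2 : r ^ 2 = (1 + n 0) / 2 := Real.sq_sqrt hpos.le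
    have hr : r ≠ 0 := (Real.sqrt_pos.mpr hpos).ne'
    -- the inverse of the Bloch map away from the south pole `(-1, 0, 0)`
    refine ⟨![r, ⟨n 1 / (2 * r), n 2 / (2 * r)⟩], ?_, ?_⟩
    · simp only [Fin.sum_univ_two, Complex.sq_norm, Complex.normSq_apply, Fin.isValue,
        Matrix.cons_val_zero, Matrix.cons_val_one, Complex.ofReal_re, Complex.ofReal_im]
      field_simp
      nlinarith
    · ext i
      fin_cases i <;> simp [blochVector, Complex.sq_norm, Complex.normSq_apply] <;> field_simp
      nlinarith

/-- For any three unit vectors `Φ₁, Φ₂, Φ₃` in `ℂ²` there is a unit vector `α`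
whose Hermitian inner products with the three vectors all have the same modulus. -/
theorem equidistant_vector_exists (Φ₁ Φ₂ Φ₃ : Fin 2 → ℂ)
    (h₁ : ∑ i, ‖Φ₁ i‖ ^ 2 = 1)
    (h₂ : ∑ i, ‖Φ₂ i‖ ^ 2 = 1)
    (h₃ : ∑ i, ‖Φ₃ i‖ ^ 2 = 1) :
    ∃ a : Fin 2 → ℂ, (∑ i, ‖a i‖ ^ 2 = 1) ∧
      ‖∑ i, starRingEnd ℂ (a i) * Φ₁ i‖
        = ‖∑ i, starRingEnd ℂ (a i) * Φ₂ i‖ ∧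
      ‖∑ i, starRingEnd ℂ (a i) * Φ₂ i‖
        = ‖∑ i, starRingEnd ℂ (a i) * Φ₃ i‖ := by
  obtain ⟨n, hn, hperp⟩ := exists_norm_eq_one_forall_inner_eq_zero (𝕜 := ℝ)
    {blochVector Φ₁ - blochVector Φ₂, blochVector Φ₂ - blochVector Φ₃}
    (Finset.card_le_two.trans_lt (by simp))
  obtain ⟨a, ha, rfl⟩ := exists_blochVector_eq n hn
  have h₁₂ := hperp _ (Finset.mem_insert_self _ _)
  have h₂₃ := hperp _ (Finset.mem_insert_of_mem (Finset.mem_singleton_self _))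
  rw [inner_sub_right, sub_eq_zero] at h₁₂ h₂₃
  refine ⟨a, ha, ?_, ?_⟩ <;>
    simp only [norm_sum_conj_mul_eq_sqrt ha h₁, norm_sum_conj_mul_eq_sqrt ha h₂,
      norm_sum_conj_mul_eq_sqrt ha h₃, h₁₂, h₂₃]
end

section
/- Let U be a unitary 2×2 complex matrix and let ρ be a density matrix on ℂ². Then there exists a unit vector ψ ∈ ℂ² such that |ψ_i|² = ρ_{ii} for i = 1, 2 and |(Uψ)_k|² = (UρU†)_{kk} for k = 1, 2; i.e., every state on ℂ² has a pure state with the same pair of outcome distributions in both bases. -/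
/-!
For a Hermitian `σ : Matrix (Fin 2) (Fin 2) ℂ`, the real diagonal of `U σ Uᴴ` is determined by
the diagonal of `σ` and by `Re (c σ₀₁)` with `c = U₀₀ conj U₀₁`: unitarity gives the second row
the coefficient `-c`. The pure state `ψ ψᴴ` may have diagonal `(ρ₀₀, ρ₁₁)` and any off-diagonal
entry `z` with `‖z‖ = √ρ₀₀ √ρ₁₁`. Positivity of `det ρ` gives `‖ρ₀₁‖ ≤ √ρ₀₀ √ρ₁₁`, so `Re (c ρ₀₁)`
lies between the extreme values `± ‖c‖ √ρ₀₀ √ρ₁₁` of `Re (c z)` on that circle, and the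
intermediate value theorem provides the required `z`.
-/

open Matrix Complex ComplexConjugate
open scoped ComplexOrder

theorem Complex.exists_norm_eq_re_mul_eq (c : ℂ) {a R : ℝ} (hR : 0 ≤ R) (ha : |a| ≤ ‖c‖ * R) :
    ∃ z : ℂ, ‖z‖ = R ∧ (c * z).re = a := by
  set w := exp (-arg c * I)
  have hcw : c * w = ‖c‖ := by
    rw [← norm_mul_exp_arg_mul_I c, mul_assoc, ← exp_add]
    simp
  have hw : ‖w‖ = 1 := by simp [w, Complex.norm_exp]
  have hre (s : ℝ) : (c * (s * w)).re = s * ‖c‖ := by simp [mul_left_comm c, hcw]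
  have hsphere : IsPreconnected (Metric.sphere (0 : ℂ) R) :=
    (isConnected_sphere (by simp [Complex.rank_real_complex]) 0 hR).isPreconnected
  obtain ⟨z, hz, hcz⟩ := hsphere.intermediate_value (f := fun z => (c * z).re)
    (a := -R * w) (b := R * w) (by simp [hw, abs_of_nonneg hR]) (by simp [hw, abs_of_nonneg hR])
    (by fun_prop)
    ⟨by simpa [hre, mul_comm] using neg_le_of_abs_le ha,
      by simpa [hre, mul_comm] using le_of_abs_le ha⟩
  exact ⟨z, by simpa using hz, hcz⟩

theorem Complex.exists_fin_two_sq_norm_eq_mul_conj_eq {p q : ℝ} (hp : 0 ≤ p) (hq : 0 ≤ q)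
    {z : ℂ} (hz : ‖z‖ = √p * √q) :
    ∃ ψ : Fin 2 → ℂ, ‖ψ 0‖ ^ 2 = p ∧ ‖ψ 1‖ ^ 2 = q ∧ ψ 0 * conj (ψ 1) = z := by
  refine ⟨![√p * exp (arg z * I), √q], ?_, ?_, ?_⟩
  · simp [norm_exp_ofReal_mul_I, hp]
  · simp [hq]
  · conv_rhs => rw [← norm_mul_exp_arg_mul_I z, hz]
    simp only [cons_val_zero, cons_val_one, conj_ofReal]
    push_cast
    ring

namespace Matrix

theorem PosSemidef.norm_apply_zero_one_le {A : Matrix (Fin 2) (Fin 2) ℂ} (hA : A.PosSemidef) :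
    ‖A 0 1‖ ≤ √(A 0 0).re * √(A 1 1).re := by
  have hdiag (i : Fin 2) := Complex.nonneg_iff.mp (hA.diag_nonneg (i := i))
  have hdet := (Complex.nonneg_iff.mp hA.det_nonneg).1
  rw [det_fin_two, ← hA.isHermitian.apply 1 0, star_def, mul_conj'] at hdet
  rw [← Real.sqrt_mul (hdiag 0).1]
  apply Real.le_sqrt_of_sq_le
  simpa [Complex.mul_re, ← (hdiag 0).2, ← (hdiag 1).2, ← ofReal_pow] using hdet

theorem IsHermitian.re_mul_mul_conjTranspose_fin_two_apply {A : Matrix (Fin 2) (Fin 2) ℂ}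
    (hA : A.IsHermitian) (U : Matrix (Fin 2) (Fin 2) ℂ) (k : Fin 2) :
    ((U * A * Uᴴ) k k).re = ‖U k 0‖ ^ 2 * (A 0 0).re + ‖U k 1‖ ^ 2 * (A 1 1).re
      + 2 * (U k 0 * conj (U k 1) * A 0 1).re := by
  simp [mul_apply, Fin.sum_univ_two, ← hA.apply 1 0, Complex.mul_re, Complex.sq_norm,
    normSq_apply]
  ring

theorem mul_conj_fin_two_of_mem_unitaryGroup {U : Matrix (Fin 2) (Fin 2) ℂ}
    (hU : U ∈ unitaryGroup (Fin 2) ℂ) : U 1 0 * conj (U 1 1) = -(U 0 0 * conj (U 0 1)) := by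
  have h := congrFun₂ (mem_unitaryGroup_iff'.mp hU) 1 0
  simp [mul_apply, Fin.sum_univ_two] at h
  linear_combination h

theorem re_diag_mul_mul_conjTranspose_fin_two_eq {U A B : Matrix (Fin 2) (Fin 2) ℂ}
    (hU : U ∈ unitaryGroup (Fin 2) ℂ) (hA : A.IsHermitian) (hB : B.IsHermitian)
    (h0 : (A 0 0).re = (B 0 0).re) (h1 : (A 1 1).re = (B 1 1).re)
    (h01 : (U 0 0 * conj (U 0 1) * A 0 1).re = (U 0 0 * conj (U 0 1) * B 0 1).re) (k : Fin 2) :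
    ((U * A * Uᴴ) k k).re = ((U * B * Uᴴ) k k).re := by
  rw [hA.re_mul_mul_conjTranspose_fin_two_apply, hB.re_mul_mul_conjTranspose_fin_two_apply, h0, h1]
  match k with
  | 0 => rw [h01]
  | 1 => rw [mul_conj_fin_two_of_mem_unitaryGroup hU, neg_mul, neg_mul, neg_re, neg_re, h01]

theorem mul_vecMulVec_star_mul_conjTranspose {m n α : Type*} [Fintype m] [Fintype n]
    [Semiring α] [StarRing α] (U : Matrix m n α) (v : n → α) :
    U * vecMulVec v (star v) * Uᴴ = vecMulVec (U *ᵥ v) (star (U *ᵥ v)) := by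
  rw [mul_vecMulVec, vecMulVec_mul, star_mulVec]

theorem re_vecMulVec_star_apply_self {n : Type*} (v : n → ℂ) (i : n) :
    (vecMulVec v (star v) i i).re = ‖v i‖ ^ 2 := by
  simp [vecMulVec_apply, mul_conj', ← ofReal_pow]

end Matrix

/-- In dimension `d = 2`, every density matrix admits a pure state with the same
pair of outcome distributions in both bases. -/
theorem qubit_pure_state_same_distributions
    (U : Matrix (Fin 2) (Fin 2) ℂ) (hU : U ∈ Matrix.unitaryGroup (Fin 2) ℂ)
    (ρ : Matrix (Fin 2) (Fin 2) ℂ) (hρ : ρ.PosSemidef) (htr : ρ.trace = 1) :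
    ∃ ψ : Fin 2 → ℂ, (∑ i, ‖ψ i‖ ^ 2 = 1) ∧
      (∀ i, ‖ψ i‖ ^ 2 = (ρ i i).re) ∧
      (∀ k, ‖U.mulVec ψ k‖ ^ 2 = ((U * ρ * Uᴴ) k k).re) := by
  have hdiag (i : Fin 2) : 0 ≤ (ρ i i).re := (Complex.nonneg_iff.mp hρ.diag_nonneg).1
  set c := U 0 0 * conj (U 0 1)
  have hbound : |(c * ρ 0 1).re| ≤ ‖c‖ * (√(ρ 0 0).re * √(ρ 1 1).re) :=
    (abs_re_le_norm _).trans (by rw [norm_mul]; gcongr; exact hρ.norm_apply_zero_one_le)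
  obtain ⟨z, hz, hcz⟩ := exists_norm_eq_re_mul_eq c (by positivity) hbound
  obtain ⟨ψ, hψ0, hψ1, hψ01⟩ := exists_fin_two_sq_norm_eq_mul_conj_eq (hdiag 0) (hdiag 1) hz
  refine ⟨ψ, ?_, Fin.forall_fin_two.mpr ⟨hψ0, hψ1⟩, fun k => ?_⟩
  · simpa [Fin.sum_univ_two, hψ0, hψ1, trace_fin_two] using congrArg re htr
  · rw [← re_vecMulVec_star_apply_self, ← mul_vecMulVec_star_mul_conjTranspose]
    refine re_diag_mul_mul_conjTranspose_fin_two_eq hU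
      (posSemidef_vecMulVec_self_star ψ).isHermitian hρ.isHermitian ?_ ?_ ?_ k
    · rw [re_vecMulVec_star_apply_self, hψ0]
    · rw [re_vecMulVec_star_apply_self, hψ1]
    · rw [vecMulVec_apply, Pi.star_apply, star_def, hψ01]
      exact hcz
end

section
/- Let U be the 3×3 Fourier matrix, U_{kj} = 3^{-1/2}·exp(2πi·jk/3) for j, k ∈ {0,1,2}, and let ρ be the density matrix on ℂ³ with diagonal (1/2, 1/2, 0) and all off-diagonal entries zero. Then there is no unit vector ψ ∈ ℂ³ with |ψ_j|² = ρ_{jj} for all j and |(Uψ)_k|² = (UρU†)_{kk} for all k (note (UρU†)_{kk} = 1/3 for all k); i.e., ρ cannot be replaced by a pure state having the same pair of outcome distributions. -/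
/-!
Write `ψ = (a, b, 0)` (forced by `ρ₂₂ = 0`), so `|a|² = |b|² = 1/2`, and `ω = e^{2πi/3}`.
All entries of `U` have modulus `3^{-1/2}`, so `UρU†` has constant diagonal `1/3`, and
`(Uψ)_k = 3^{-1/2} (a + ωᵏ b)`. Matching `k = 0, 1` gives `|a + b|² = |a + ω b|² = |a|² + |b|²`,
i.e. `Re(a b̄) = Re(ω̄ a b̄) = 0`; since `ω` is not real, `a b̄ = 0`, contradicting `|a| = |b| ≠ 0`.
-/

open Matrix ComplexConjugate

namespace Complex

theorem eq_zero_of_re_eq_zero_of_re_mul_eq_zero {z w : ℂ} (hw : w.im ≠ 0)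
    (hz : z.re = 0) (hwz : (w * z).re = 0) : z = 0 := by
  rw [mul_re, hz, mul_zero, zero_sub, neg_eq_zero, mul_eq_zero] at hwz
  exact Complex.ext hz (hwz.resolve_left hw)

/-- In `ℂ ≅ ℝ²`, `a` cannot be orthogonal to both `b` and `ω * b` for non-real `ω`
unless `a` or `b` vanishes. -/
theorem eq_zero_or_eq_zero_of_sq_norm_add_eq {a b ω : ℂ} (hω : ‖ω‖ = 1) (hω' : ω.im ≠ 0)
    (h₁ : ‖a + b‖ ^ 2 = ‖a‖ ^ 2 + ‖b‖ ^ 2) (h₂ : ‖a + ω * b‖ ^ 2 = ‖a‖ ^ 2 + ‖b‖ ^ 2) :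
    a = 0 ∨ b = 0 := by
  simp only [Complex.sq_norm] at h₁ h₂
  have hz : (a * conj b).re = 0 := by
    rw [normSq_add] at h₁; linarith
  have hωz : (conj ω * (a * conj b)).re = 0 := by
    rw [normSq_add, normSq_mul, normSq_eq_norm_sq ω, hω, map_mul, mul_left_comm] at h₂; linarith
  simpa using eq_zero_of_re_eq_zero_of_re_mul_eq_zero (by simpa using hω') hz hωz

theorem im_exp_two_pi_I_div_three_pos : 0 < (exp (2 * Real.pi * I / 3)).im := by
  have : 2 * Real.pi * I / 3 = ((2 * Real.pi / 3 : ℝ) : ℂ) * I := by push_cast; ring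
  rw [this, exp_ofReal_mul_I_im]
  exact Real.sin_pos_of_pos_of_lt_pi (by positivity) (by linarith [Real.pi_pos])

theorem sq_norm_inv_sqrt_mul {r : ℝ} (hr : 0 ≤ r) (z : ℂ) :
    ‖(Real.sqrt r : ℂ)⁻¹ * z‖ ^ 2 = ‖z‖ ^ 2 / r := by
  rw [norm_mul, norm_inv, norm_real, Real.norm_of_nonneg (Real.sqrt_nonneg _), mul_pow,
    inv_pow, Real.sq_sqrt hr, inv_mul_eq_div]

end Complex

theorem Matrix.mul_diagonal_mul_conjTranspose_apply_self {m n 𝕜 : Type*} [Fintype n]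
    [DecidableEq n] [RCLike 𝕜] (U : Matrix m n 𝕜) (d : n → 𝕜) (k : m) :
    (U * diagonal d * Uᴴ) k k = ∑ j, d j * ((‖U k j‖ ^ 2 : ℝ) : 𝕜) := by
  simp only [mul_apply, diagonal_apply, mul_ite, mul_zero, Finset.sum_ite_eq',
    Finset.mem_univ, if_true, conjTranspose_apply, RCLike.star_def]
  refine Finset.sum_congr rfl fun j _ => ?_
  rw [RCLike.ofReal_pow, ← RCLike.mul_conj]; ring

theorem fourier3_apply {U : Matrix (Fin 3) (Fin 3) ℂ}
    (hU : ∀ k j : Fin 3, U k j = (Real.sqrt 3 : ℂ)⁻¹ *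
        Complex.exp (2 * Real.pi * Complex.I * ((j.val : ℂ) * (k.val : ℂ)) / 3)) (k j : Fin 3) :
    U k j = (Real.sqrt 3 : ℂ)⁻¹ * Complex.exp (2 * Real.pi * Complex.I / 3) ^ (j.val * k.val) := by
  rw [hU, ← Complex.exp_nat_mul]
  push_cast
  ring_nf

theorem fourier3_sq_norm_apply {U : Matrix (Fin 3) (Fin 3) ℂ}
    (hU : ∀ k j : Fin 3, U k j = (Real.sqrt 3 : ℂ)⁻¹ *
        Complex.exp (2 * Real.pi * Complex.I * ((j.val : ℂ) * (k.val : ℂ)) / 3)) (k j : Fin 3) :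
    ‖U k j‖ ^ 2 = 1 / 3 := by
  rw [hU, Complex.sq_norm_inv_sqrt_mul (by norm_num), Complex.norm_exp]
  simp

/-- For the `3×3` Fourier matrix and the mixed state with diagonal `(1/2, 1/2, 0)`,
no pure state has the same pair of outcome distributions. -/
theorem no_pure_state_d3
    (U : Matrix (Fin 3) (Fin 3) ℂ)
    (hU : ∀ k j : Fin 3, U k j = (Real.sqrt 3 : ℂ)⁻¹ *
        Complex.exp (2 * Real.pi * Complex.I * ((j.val : ℂ) * (k.val : ℂ)) / 3))
    (ρ : Matrix (Fin 3) (Fin 3) ℂ)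
    (hρ : ρ = Matrix.diagonal ![(1 / 2 : ℂ), 1 / 2, 0]) :
    ¬ ∃ ψ : Fin 3 → ℂ, (∑ j, ‖ψ j‖ ^ 2 = 1) ∧
      (∀ j, ‖ψ j‖ ^ 2 = (ρ j j).re) ∧
      (∀ k, ‖U.mulVec ψ k‖ ^ 2 = ((U * ρ * Uᴴ) k k).re) := by
  rintro ⟨ψ, -, hp, hq⟩
  subst hρ
  set ω := Complex.exp (2 * Real.pi * Complex.I / 3)
  have hψ₀ : ‖ψ 0‖ ^ 2 = 1 / 2 := by simpa using hp 0
  have hψ₁ : ‖ψ 1‖ ^ 2 = 1 / 2 := by simpa using hp 1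
  have hψ₂ : ψ 2 = 0 := by simpa using hp 2
  have hmulVec (k : Fin 3) : (U *ᵥ ψ) k = (Real.sqrt 3 : ℂ)⁻¹ * (ψ 0 + ω ^ k.val * ψ 1) := by
    simp [mulVec, dotProduct, Fin.sum_univ_three, fourier3_apply hU, hψ₂, ω]
    ring
  have horth (k : Fin 3) : ‖ψ 0 + ω ^ k.val * ψ 1‖ ^ 2 = ‖ψ 0‖ ^ 2 + ‖ψ 1‖ ^ 2 := by
    have hk := hq k
    rw [hmulVec, Complex.sq_norm_inv_sqrt_mul (by norm_num),
      mul_diagonal_mul_conjTranspose_apply_self, Fin.sum_univ_three] at hk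
    simp [fourier3_sq_norm_apply hU] at hk
    linarith
  have hω : ‖ω‖ = 1 := by simp [ω, Complex.norm_exp]
  rcases Complex.eq_zero_or_eq_zero_of_sq_norm_add_eq hω Complex.im_exp_two_pi_I_div_three_pos.ne'
    (by simpa using horth 0) (by simpa using horth 1) with h | h <;> simp [h] at hψ₀ hψ₁
end

section
/- Let U be a real orthogonal d×d matrix and let g₁, g₂ be continuous, concave real-valued functions on the probability simplex Δ_d = {p ∈ ℝ^d : p_i ≥ 0, ∑_i p_i = 1}. Define f₁(ρ) = g₁(p^ρ) and f₂(ρ) = g₂(q^ρ) for density matrices ρ on ℂ^d, where p^ρ(i) = ρ_{ii} and q^ρ(k) = (UρU†)_{kk}. Then for every density matrix ρ on ℂ^d there exists a unit vector v ∈ ℝ^d with real entries such that f₁(vv†) ≤ f₁(ρ) and f₂(vv†) ≤ f₂(ρ). -/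
open Matrix
open scoped ComplexOrder

/-!
Write `ρ` as `∑ z z†` and replace it by the real state `∑ v vᵀ`, `v` running over the real and
imaginary parts of the vectors `z`: for a real `U` the diagonals of `ρ` and `U ρ Uᵀ` only see this
real state. Rotating two of the vectors, `a ↦ cos θ a + sin θ b`, `b ↦ -sin θ a + cos θ b`, leaves
the state unchanged and exhibits it as a convex combination of the pure state of the first rotated
vector and a state with one vector fewer.

Suppose no pure state lies in both sublevel sets `{f₁ ≤ f₁ ρ}` and `{f₂ ≤ f₂ ρ}` and induct on the
number of vectors. By concavity each rotated pure state lies in one of the two sets (otherwise the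
smaller state would lie in both); as they are closed and disjoint on pure states, the connected
family of rotations keeps `a` and `b` in the same one. Concavity also puts some vector `a` of the
state into the first sublevel set and some `b` into the second, so `b` lies in both.
-/

namespace RealPureState

open Real

variable {d : ℕ}

def sqAmps (W : Matrix (Fin d) (Fin d) ℝ) (v : Fin d → ℝ) : Fin d → ℝ :=
  fun k => (W *ᵥ v) k ^ 2

/- A multiset `s` of real vectors stands for the unnormalized real state `∑ v ∈ s, v vᵀ`:
`mass s` is its trace and `outcomeDist W s` is the distribution of outcomes when it is
measured in the orthonormal basis formed by the rows of `W`. -/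
def mixture (W : Matrix (Fin d) (Fin d) ℝ) (s : Multiset (Fin d → ℝ)) : Fin d → ℝ :=
  (s.map (sqAmps W)).sum

def mass (s : Multiset (Fin d → ℝ)) : ℝ :=
  (s.map fun v => v ⬝ᵥ v).sum

noncomputable def outcomeDist (W : Matrix (Fin d) (Fin d) ℝ) (s : Multiset (Fin d → ℝ)) :
    Fin d → ℝ :=
  (mass s)⁻¹ • mixture W s

def IsSublevel (W : Matrix (Fin d) (Fin d) ℝ) (g : (Fin d → ℝ) → ℝ) (c : ℝ)
    (s : Multiset (Fin d → ℝ)) : Prop :=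
  mass s ≠ 0 ∧ g (outcomeDist W s) ≤ c

variable {W : Matrix (Fin d) (Fin d) ℝ} {g : (Fin d → ℝ) → ℝ} {c : ℝ}
  {s : Multiset (Fin d → ℝ)} {a b v : Fin d → ℝ}

@[simp] lemma mixture_zero : mixture W 0 = 0 := by simp [mixture]

@[simp] lemma mixture_cons : mixture W (a ::ₘ s) = sqAmps W a + mixture W s := by
  simp [mixture]

@[simp] lemma mass_zero : mass (0 : Multiset (Fin d → ℝ)) = 0 := by simp [mass]

@[simp] lemma mass_cons : mass (a ::ₘ s) = a ⬝ᵥ a + mass s := by simp [mass]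

@[simp] lemma sqAmps_zero : sqAmps W 0 = 0 := by ext; simp [sqAmps]

lemma sqAmps_nonneg (k : Fin d) : 0 ≤ sqAmps W v k := sq_nonneg _

lemma mixture_nonneg (k : Fin d) : 0 ≤ mixture W s k := by
  induction s using Multiset.induction_on with
  | empty => simp
  | cons a s ih => simpa using add_nonneg (sqAmps_nonneg k) ih

lemma mass_nonneg : 0 ≤ mass s := by
  induction s using Multiset.induction_on with
  | empty => simp
  | cons a s ih =>
    rw [mass_cons]
    exact add_nonneg (by simpa using dotProduct_star_self_nonneg a) ih

lemma mass_singleton_ne_zero : mass {v} ≠ 0 ↔ v ≠ 0 := by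
  simp [← Multiset.cons_zero]

lemma outcomeDist_singleton : outcomeDist W {v} = (v ⬝ᵥ v)⁻¹ • sqAmps W v := by
  simp [outcomeDist, ← Multiset.cons_zero]

lemma sqAmps_rotate (θ : ℝ) (a b : Fin d → ℝ) :
    sqAmps W (cos θ • a + sin θ • b) + sqAmps W (-sin θ • a + cos θ • b) =
      sqAmps W a + sqAmps W b := by
  ext k
  simp only [sqAmps, Pi.add_apply, mulVec_add, mulVec_smul, Pi.smul_apply, smul_eq_mul]
  linear_combination ((W *ᵥ a) k ^ 2 + (W *ᵥ b) k ^ 2) * cos_sq_add_sin_sq θ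

lemma mixture_rotate (θ : ℝ) (a b : Fin d → ℝ) (s : Multiset (Fin d → ℝ)) :
    mixture W ((cos θ • a + sin θ • b) ::ₘ (-sin θ • a + cos θ • b) ::ₘ s) =
      mixture W (a ::ₘ b ::ₘ s) := by
  simp only [mixture_cons, ← add_assoc, sqAmps_rotate]

lemma dotProduct_mulVec_self (hW : W ∈ orthogonalGroup (Fin d) ℝ) (v : Fin d → ℝ) :
    (W *ᵥ v) ⬝ᵥ (W *ᵥ v) = v ⬝ᵥ v := by
  rw [dotProduct_mulVec, ← mulVec_transpose, mulVec_mulVec,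
    (mem_orthogonalGroup_iff' _ _).1 hW, one_mulVec]

lemma sum_sqAmps (hW : W ∈ orthogonalGroup (Fin d) ℝ) (v : Fin d → ℝ) :
    ∑ k, sqAmps W v k = v ⬝ᵥ v := by
  simp only [sqAmps, sq, ← dotProduct_mulVec_self hW v]
  rfl

lemma sum_mixture (hW : W ∈ orthogonalGroup (Fin d) ℝ) (s : Multiset (Fin d → ℝ)) :
    ∑ k, mixture W s k = mass s := by
  induction s using Multiset.induction_on with
  | empty => simp
  | cons a s ih => simp [Finset.sum_add_distrib, ih, sum_sqAmps hW]

lemma mixture_eq_zero (hW : W ∈ orthogonalGroup (Fin d) ℝ) (hs : mass s = 0) :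
    mixture W s = 0 := by
  ext k
  rw [← sum_mixture hW, Finset.sum_eq_zero_iff_of_nonneg fun k _ => mixture_nonneg k] at hs
  exact hs k (Finset.mem_univ k)

lemma outcomeDist_mem_stdSimplex (hW : W ∈ orthogonalGroup (Fin d) ℝ) (hs : mass s ≠ 0) :
    outcomeDist W s ∈ stdSimplex ℝ (Fin d) := by
  refine ⟨fun k => mul_nonneg (inv_nonneg.2 mass_nonneg) (mixture_nonneg k), ?_⟩
  simp only [outcomeDist, Pi.smul_apply, smul_eq_mul, ← Finset.mul_sum, sum_mixture hW,
    inv_mul_cancel₀ hs]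

lemma mass_rotate (θ : ℝ) (a b : Fin d → ℝ) (s : Multiset (Fin d → ℝ)) :
    mass ((cos θ • a + sin θ • b) ::ₘ (-sin θ • a + cos θ • b) ::ₘ s) =
      mass (a ::ₘ b ::ₘ s) := by
  simp only [← sum_mixture (one_mem _), mixture_rotate]

lemma isSublevel_rotate (θ : ℝ) (a b : Fin d → ℝ) (s : Multiset (Fin d → ℝ)) :
    IsSublevel W g c ((cos θ • a + sin θ • b) ::ₘ (-sin θ • a + cos θ • b) ::ₘ s) ↔
      IsSublevel W g c (a ::ₘ b ::ₘ s) := by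
  simp only [IsSublevel, outcomeDist, mass_rotate, mixture_rotate]

lemma outcomeDist_cons (ha : a ≠ 0) (hs : mass s ≠ 0) :
    outcomeDist W (a ::ₘ s) = (a ⬝ᵥ a / mass (a ::ₘ s)) • outcomeDist W {a} +
      (mass s / mass (a ::ₘ s)) • outcomeDist W s := by
  have ha' : a ⬝ᵥ a ≠ 0 := by simpa using ha
  ext k
  simp only [outcomeDist, Pi.add_apply, Pi.smul_apply, smul_eq_mul, mixture_cons,
    ← Multiset.cons_zero, mass_cons, mass_zero, mixture_zero, add_zero]
  field_simp

lemma IsSublevel.cons (hW : W ∈ orthogonalGroup (Fin d) ℝ)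
    (hg : ConcaveOn ℝ (stdSimplex ℝ (Fin d)) g) (h : IsSublevel W g c (a ::ₘ s)) :
    IsSublevel W g c {a} ∨ IsSublevel W g c s := by
  obtain ⟨hm, hle⟩ := h
  by_cases ha : a = 0
  · subst ha
    right
    simpa [IsSublevel, outcomeDist] using And.intro hm hle
  by_cases hs : mass s = 0
  · left
    refine ⟨mass_singleton_ne_zero.2 ha, ?_⟩
    simpa [outcomeDist, ← Multiset.cons_zero, hs, mixture_eq_zero hW hs] using hle
  have hmem : outcomeDist W (a ::ₘ s) ∈ segment ℝ (outcomeDist W {a}) (outcomeDist W s) := by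
    refine ⟨a ⬝ᵥ a / mass (a ::ₘ s), mass s / mass (a ::ₘ s),
      div_nonneg (by simpa using dotProduct_star_self_nonneg a) mass_nonneg,
      div_nonneg mass_nonneg mass_nonneg, ?_, (outcomeDist_cons ha hs).symm⟩
    rw [← add_div, ← mass_cons, div_self hm]
  have := (hg.min_le_of_mem_segment (outcomeDist_mem_stdSimplex hW
    (mass_singleton_ne_zero.2 ha)) (outcomeDist_mem_stdSimplex hW hs) hmem).trans hle
  rcases min_le_iff.1 this with h | h
  · exact Or.inl ⟨mass_singleton_ne_zero.2 ha, h⟩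
  · exact Or.inr ⟨hs, h⟩

lemma IsSublevel.exists_mem (hW : W ∈ orthogonalGroup (Fin d) ℝ)
    (hg : ConcaveOn ℝ (stdSimplex ℝ (Fin d)) g) (h : IsSublevel W g c s) :
    ∃ a ∈ s, IsSublevel W g c {a} := by
  induction s using Multiset.induction_on with
  | empty => exact absurd mass_zero h.1
  | cons a s ih =>
    rcases h.cons hW hg with ha | hs
    · exact ⟨a, Multiset.mem_cons_self a s, ha⟩
    · obtain ⟨b, hb, hb'⟩ := ih hs
      exact ⟨b, Multiset.mem_cons_of_mem hb, hb'⟩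

lemma continuous_outcomeDist_singleton {X : Type*} [TopologicalSpace X] {x : X → Fin d → ℝ}
    (hx : Continuous x) (hx₀ : ∀ t, x t ≠ 0) :
    Continuous fun t => outcomeDist W {x t} := by
  simp only [outcomeDist_singleton]
  exact ((hx.dotProduct hx).inv₀ fun t => by simpa using hx₀ t).smul <| continuous_pi fun k =>
    ((continuous_apply k).comp (continuous_const.matrix_mulVec hx)).pow 2

lemma isClopen_setOf_le_of_le_iff_lt {X : Type*} [TopologicalSpace X] {φ ψ : X → ℝ} {a b : ℝ}
    (hφ : Continuous φ) (hψ : Continuous ψ) (h : ∀ x, φ x ≤ a ↔ b < ψ x) :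
    IsClopen {x | φ x ≤ a} :=
  ⟨isClosed_le hφ continuous_const, by simpa only [h] using isOpen_lt continuous_const hψ⟩

section TwoBases

variable {W₁ W₂ : Matrix (Fin d) (Fin d) ℝ} {g₁ g₂ : (Fin d → ℝ) → ℝ} {c₁ c₂ : ℝ}

/-- Every pure state on the way from `a` to `b` lies in one of the two sublevel sets, since
otherwise the remaining vectors would give a smaller state in both. -/
lemma isSublevel_singleton_of_rotate (hW₁ : W₁ ∈ orthogonalGroup (Fin d) ℝ)
    (hW₂ : W₂ ∈ orthogonalGroup (Fin d) ℝ)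
    (hg₁ : ConcaveOn ℝ (stdSimplex ℝ (Fin d)) g₁) (hg₂ : ConcaveOn ℝ (stdSimplex ℝ (Fin d)) g₂)
    (hg₁c : ContinuousOn g₁ (stdSimplex ℝ (Fin d))) (hg₂c : ContinuousOn g₂ (stdSimplex ℝ (Fin d)))
    {t : Multiset (Fin d → ℝ)}
    (hpure : ∀ v, IsSublevel W₁ g₁ c₁ {v} → ¬ IsSublevel W₂ g₂ c₂ {v})
    (hsmaller : ∀ θ : ℝ, IsSublevel W₁ g₁ c₁ ((-sin θ • a + cos θ • b) ::ₘ t) →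
      ¬ IsSublevel W₂ g₂ c₂ ((-sin θ • a + cos θ • b) ::ₘ t))
    (h₁ : IsSublevel W₁ g₁ c₁ (a ::ₘ b ::ₘ t)) (h₂ : IsSublevel W₂ g₂ c₂ (a ::ₘ b ::ₘ t))
    (ha : IsSublevel W₁ g₁ c₁ {a}) : IsSublevel W₁ g₁ c₁ {b} := by
  set x : ℝ → Fin d → ℝ := fun θ => cos θ • a + sin θ • b
  have hcover : ∀ θ, IsSublevel W₁ g₁ c₁ {x θ} ∨ IsSublevel W₂ g₂ c₂ {x θ} := by
    intro θ
    refine (((isSublevel_rotate θ a b t).2 h₁).cons hW₁ hg₁).imp_right fun hsm₁ => ?_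
    exact (((isSublevel_rotate θ a b t).2 h₂).cons hW₂ hg₂).resolve_right (hsmaller θ hsm₁)
  have hx₀ : ∀ θ, x θ ≠ 0 := fun θ =>
    mass_singleton_ne_zero.1 ((hcover θ).elim And.left And.left)
  have hcont : ∀ {W : Matrix (Fin d) (Fin d) ℝ} {g : (Fin d → ℝ) → ℝ},
      W ∈ orthogonalGroup (Fin d) ℝ → ContinuousOn g (stdSimplex ℝ (Fin d)) →
      Continuous fun θ => g (outcomeDist W {x θ}) := fun hW hg =>
    hg.comp_continuous (continuous_outcomeDist_singleton (by fun_prop) hx₀) fun θ =>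
      outcomeDist_mem_stdSimplex hW (mass_singleton_ne_zero.2 (hx₀ θ))
  have hiff : ∀ θ, g₁ (outcomeDist W₁ {x θ}) ≤ c₁ ↔ c₂ < g₂ (outcomeDist W₂ {x θ}) := by
    intro θ
    have hm := mass_singleton_ne_zero.2 (hx₀ θ)
    refine ⟨fun h => lt_of_not_ge fun h' => hpure _ ⟨hm, h⟩ ⟨hm, h'⟩, fun h => ?_⟩
    exact ((hcover θ).resolve_right fun h' => h.not_ge h'.2).2
  have huniv := (isClopen_iff.1 (isClopen_setOf_le_of_le_iff_lt (hcont hW₁ hg₁c)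
    (hcont hW₂ hg₂c) hiff)).resolve_left
    (Set.nonempty_iff_ne_empty.1 ⟨0, by simpa [x] using ha.2⟩)
  have hb : x (π / 2) = b := by simp [x]
  have hπ : π / 2 ∈ {θ | g₁ (outcomeDist W₁ {x θ}) ≤ c₁} := huniv ▸ Set.mem_univ _
  exact hb ▸ ⟨mass_singleton_ne_zero.2 (hx₀ _), hπ⟩

theorem exists_isSublevel_singleton (hW₁ : W₁ ∈ orthogonalGroup (Fin d) ℝ)
    (hW₂ : W₂ ∈ orthogonalGroup (Fin d) ℝ)
    (hg₁ : ConcaveOn ℝ (stdSimplex ℝ (Fin d)) g₁) (hg₂ : ConcaveOn ℝ (stdSimplex ℝ (Fin d)) g₂)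
    (hg₁c : ContinuousOn g₁ (stdSimplex ℝ (Fin d))) (hg₂c : ContinuousOn g₂ (stdSimplex ℝ (Fin d)))
    {s : Multiset (Fin d → ℝ)} (h₁ : IsSublevel W₁ g₁ c₁ s) (h₂ : IsSublevel W₂ g₂ c₂ s) :
    ∃ v, IsSublevel W₁ g₁ c₁ {v} ∧ IsSublevel W₂ g₂ c₂ {v} := by
  classical
  by_contra! hpure
  induction hn : Multiset.card s using Nat.strong_induction_on generalizing s with
  | _ n ih =>
  obtain ⟨a, has, ha⟩ := h₁.exists_mem hW₁ hg₁
  obtain ⟨b, hbs, hb⟩ := h₂.exists_mem hW₂ hg₂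
  obtain rfl | hab := eq_or_ne b a
  · exact hpure b ha hb
  obtain ⟨t, ht⟩ := Multiset.exists_cons_of_mem ((Multiset.mem_erase_of_ne hab).2 hbs)
  rw [← Multiset.cons_erase has, ht] at h₁ h₂ hn
  refine hpure b (isSublevel_singleton_of_rotate hW₁ hW₂ hg₁ hg₂ hg₁c hg₂c hpure
    (fun θ hsm₁ hsm₂ => ih _ ?_ hsm₁ hsm₂ rfl) h₁ h₂ ha) hb
  simp [← hn]

end TwoBases

def diagRe (W : Matrix (Fin d) (Fin d) ℝ) (M : Matrix (Fin d) (Fin d) ℂ) : Fin d → ℝ :=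
  fun k => ((W.map (fun x => (x : ℂ)) * M * (W.map (fun x => (x : ℂ)))ᴴ) k k).re

lemma re_mulVec_map_ofReal (W : Matrix (Fin d) (Fin d) ℝ) (z : Fin d → ℂ) (k : Fin d) :
    (W.map (fun x => (x : ℂ)) *ᵥ z) k =
      ((W *ᵥ fun i => (z i).re) k : ℂ) + ((W *ᵥ fun i => (z i).im) k) * Complex.I := by
  apply Complex.ext <;> simp [mulVec, dotProduct, Complex.re_sum, Complex.im_sum]

lemma diagRe_vecMulVec (W : Matrix (Fin d) (Fin d) ℝ) (z : Fin d → ℂ) :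
    diagRe W (vecMulVec z (star z)) =
      sqAmps W (fun i => (z i).re) + sqAmps W (fun i => (z i).im) := by
  ext k
  rw [diagRe, mul_vecMulVec, vecMulVec_mul, ← star_mulVec, vecMulVec_apply, Pi.star_apply,
    Complex.star_def, Complex.mul_conj, re_mulVec_map_ofReal]
  simp [Complex.normSq_apply, sqAmps, sq]

lemma diagRe_sum {m : ℕ} (W : Matrix (Fin d) (Fin d) ℝ)
    (M : Fin m → Matrix (Fin d) (Fin d) ℂ) : diagRe W (∑ i, M i) = ∑ i, diagRe W (M i) := by
  ext k
  simp [diagRe, Matrix.mul_sum, Matrix.sum_mul, Matrix.sum_apply, Complex.re_sum]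

lemma diagRe_one (M : Matrix (Fin d) (Fin d) ℂ) : diagRe 1 M = fun k => (M k k).re := by
  funext k
  simp [diagRe]

lemma diagRe_vecMulVec_ofReal (W : Matrix (Fin d) (Fin d) ℝ) (v : Fin d → ℝ) :
    diagRe W (vecMulVec (fun j => (v j : ℂ)) (star fun j => (v j : ℂ))) = sqAmps W v := by
  rw [diagRe_vecMulVec]
  simp [← Pi.zero_def]

lemma exists_mixture_eq_diagRe {ρ : Matrix (Fin d) (Fin d) ℂ} (hρ : ρ.PosSemidef) :
    ∃ s : Multiset (Fin d → ℝ), ∀ W, mixture W s = diagRe W ρ := by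
  obtain ⟨m, z, rfl⟩ := posSemidef_iff_eq_sum_vecMulVec.1 hρ
  refine ⟨Finset.univ.val.map (fun i j => (z i j).re) +
    Finset.univ.val.map (fun i j => (z i j).im), fun W => ?_⟩
  simp only [mixture, Multiset.map_add, Multiset.sum_add, Multiset.map_map, diagRe_sum,
    diagRe_vecMulVec, Finset.sum_add_distrib]
  rfl

lemma concaveOn_of_forall_one_sub {E : Type*} [AddCommGroup E] [Module ℝ E] {S : Set E}
    {g : E → ℝ} (hS : Convex ℝ S) (hg : ∀ p q : E, p ∈ S → q ∈ S → ∀ t : ℝ, 0 ≤ t → t ≤ 1 →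
      g (t • p + (1 - t) • q) ≥ t * g p + (1 - t) * g q) :
    ConcaveOn ℝ S g := by
  refine ⟨hS, fun p hp q hq a b ha _ hab => ?_⟩
  obtain rfl : b = 1 - a := by linarith
  exact hg p q hp hq a ha (by linarith)

lemma exists_unit_sqAmps_eq_outcomeDist (hv : v ≠ 0) :
    ∃ u : Fin d → ℝ, u ⬝ᵥ u = 1 ∧ ∀ W, sqAmps W u = outcomeDist W {v} := by
  have hpos : 0 < v ⬝ᵥ v := by simpa using dotProduct_star_self_pos_iff.2 hv
  refine ⟨(√(v ⬝ᵥ v))⁻¹ • v, ?_, fun W => ?_⟩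
  · rw [smul_dotProduct, dotProduct_smul, smul_smul, smul_eq_mul, ← sq, inv_pow,
      Real.sq_sqrt hpos.le, inv_mul_cancel₀ hpos.ne']
  · ext k
    simp [sqAmps, outcomeDist_singleton, mulVec_smul, mul_pow, inv_pow, Real.sq_sqrt hpos.le]

end RealPureState

open RealPureState in
/-- For a real orthogonal `U` and two continuous concave functions on the probability
simplex, composed with the two outcome distributions, every density matrix is
dominated (componentwise in the two values) by a pure state with real entries. -/
theorem real_pure_state_dominates (d : ℕ)
    (U : Matrix (Fin d) (Fin d) ℝ) (hU : U ∈ Matrix.orthogonalGroup (Fin d) ℝ)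
    (g₁ g₂ : (Fin d → ℝ) → ℝ)
    (hcont₁ : ContinuousOn g₁ {p : Fin d → ℝ | (∀ i, 0 ≤ p i) ∧ ∑ i, p i = 1})
    (hcont₂ : ContinuousOn g₂ {p : Fin d → ℝ | (∀ i, 0 ≤ p i) ∧ ∑ i, p i = 1})
    (hconc₁ : ∀ p q : Fin d → ℝ, ((∀ i, 0 ≤ p i) ∧ ∑ i, p i = 1) →
      ((∀ i, 0 ≤ q i) ∧ ∑ i, q i = 1) → ∀ t : ℝ, 0 ≤ t → t ≤ 1 →
      g₁ (t • p + (1 - t) • q) ≥ t * g₁ p + (1 - t) * g₁ q)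
    (hconc₂ : ∀ p q : Fin d → ℝ, ((∀ i, 0 ≤ p i) ∧ ∑ i, p i = 1) →
      ((∀ i, 0 ≤ q i) ∧ ∑ i, q i = 1) → ∀ t : ℝ, 0 ≤ t → t ≤ 1 →
      g₂ (t • p + (1 - t) • q) ≥ t * g₂ p + (1 - t) * g₂ q)
    (ρ : Matrix (Fin d) (Fin d) ℂ) (hρ : ρ.PosSemidef) (htr : ρ.trace = 1) :
    ∃ v : Fin d → ℝ, (∑ i, v i ^ 2 = 1) ∧
      g₁ (fun i => (Matrix.vecMulVec (fun j => (v j : ℂ)) (star fun j => (v j : ℂ)) i i).re)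
        ≤ g₁ (fun i => (ρ i i).re) ∧
      g₂ (fun k => ((U.map (fun x => (x : ℂ)) *
            Matrix.vecMulVec (fun j => (v j : ℂ)) (star fun j => (v j : ℂ)) *
            (U.map (fun x => (x : ℂ)))ᴴ) k k).re)
        ≤ g₂ (fun k => ((U.map (fun x => (x : ℂ)) * ρ * (U.map (fun x => (x : ℂ)))ᴴ) k k).re) := by
  obtain ⟨s, hs⟩ := exists_mixture_eq_diagRe hρ
  have hmass : mass s = 1 := by
    rw [← sum_mixture (one_mem _), hs, diagRe_one, ← Complex.re_sum]
    exact congrArg Complex.re htr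
  have hdist : ∀ W, outcomeDist W s = diagRe W ρ := fun W => by simp [outcomeDist, hmass, hs]
  obtain ⟨v, hv₁, hv₂⟩ := exists_isSublevel_singleton (c₁ := g₁ (diagRe 1 ρ))
    (c₂ := g₂ (diagRe U ρ)) (one_mem _) hU
    (concaveOn_of_forall_one_sub (convex_stdSimplex ℝ _) hconc₁)
    (concaveOn_of_forall_one_sub (convex_stdSimplex ℝ _) hconc₂) hcont₁ hcont₂
    ⟨by simp [hmass], (congrArg g₁ (hdist 1)).le⟩ ⟨by simp [hmass], (congrArg g₂ (hdist U)).le⟩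
  obtain ⟨u, hu, hsq⟩ := exists_unit_sqAmps_eq_outcomeDist (mass_singleton_ne_zero.1 hv₁.1)
  refine ⟨u, by simpa [dotProduct, sq] using hu, ?_, ?_⟩
  · rw [← diagRe_one, ← diagRe_one, diagRe_vecMulVec_ofReal, hsq]
    exact hv₁.2
  · change g₂ (diagRe U _) ≤ g₂ (diagRe U ρ)
    rw [diagRe_vecMulVec_ofReal, hsq]
    exact hv₂.2
end

section
/- Let U be a d×d complex Hadamard matrix (unitary with |U_{kj}| = 1/√d for all k, j) that is dephased in its first row, i.e. U_{0j} = 1/√d for all j. Let ψ ∈ ℝ^d be a unit vector with ψ_j ≥ 0 for all j. Then H_{1/2}(p^ψ) + H_∞(q^ψ) = log d, where p^ψ(j) = ψ_j² and q^ψ(k) = |(Uψ)_k|²; i.e., every entrywise-nonnegative real unit vector saturates the Maassen–Uffink bound for the pair (α, β) = (1/2, ∞). -/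
open Matrix
open scoped ENNReal

/-!
The first row of `U` is constant, so `(Uψ)₀ = (∑ⱼ ψⱼ)/√d`; by the triangle inequality no
entry of `Uψ` can exceed this in modulus, since all entries of `U` have modulus `1/√d` and
`ψ ≥ 0`. Hence `H_∞(q^ψ) = log d - 2 log ∑ⱼ ψⱼ`, while `H_{1/2}(p^ψ) = 2 log ∑ⱼ ψⱼ` because
`√(ψⱼ²) = ψⱼ`.
-/

theorem renyiEntropy_inv_two_sq {ι : Type} [Fintype ι] {ψ : ι → ℝ} (hψ : ∀ j, 0 ≤ ψ j) :
    renyiEntropy (2 : ℝ≥0∞)⁻¹ (fun j => ψ j ^ 2) = 2 * Real.log (∑ j, ψ j) := by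
  have hsqrt : ∀ j, (ψ j ^ 2) ^ ((2⁻¹ : ℝ≥0∞).toReal) = ψ j := fun j => by
    rw [ENNReal.toReal_inv, ENNReal.toReal_ofNat, inv_eq_one_div, ← Real.sqrt_eq_rpow,
      Real.sqrt_sq (hψ j)]
  rw [renyiEntropy, if_neg (by simp), if_neg (by norm_num)]
  simp only [hsqrt]
  norm_num

theorem renyiEntropy_top_of_isGreatest {ι : Type} [Fintype ι] {p : ι → ℝ} {m : ℝ}
    (h : IsGreatest (Set.range p) m) : renyiEntropy ⊤ p = -Real.log m := by
  rw [renyiEntropy, if_pos rfl, h.csSup_eq]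

theorem mulVec_apply_of_row_eq {ι R : Type*} [Fintype ι] [NonUnitalNonAssocSemiring R]
    {U : Matrix ι ι R} {i : ι} {c : R} (hrow : ∀ j, U i j = c) (v : ι → R) :
    (U *ᵥ v) i = c * ∑ j, v j := by
  simp only [mulVec, dotProduct, hrow, Finset.mul_sum]

theorem norm_mulVec_ofReal_le {ι : Type*} [Fintype ι] {U : Matrix ι ι ℂ} {c : ℝ}
    (hU : ∀ k j, ‖U k j‖ ≤ c) {ψ : ι → ℝ} (hψ : ∀ j, 0 ≤ ψ j) (k : ι) :
    ‖(U *ᵥ fun j => (ψ j : ℂ)) k‖ ≤ c * ∑ j, ψ j := by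
  calc ‖(U *ᵥ fun j => (ψ j : ℂ)) k‖ ≤ ∑ j, ‖U k j * ψ j‖ := norm_sum_le _ _
    _ ≤ ∑ j, c * ψ j := Finset.sum_le_sum fun j _ => by
        rw [norm_mul, Complex.norm_real, Real.norm_of_nonneg (hψ j)]
        exact mul_le_mul_of_nonneg_right (hU k j) (hψ j)
    _ = c * ∑ j, ψ j := (Finset.mul_sum _ _ _).symm

theorem sum_pos_of_sum_sq_eq_one {ι : Type*} [Fintype ι] {ψ : ι → ℝ} (hψ : ∀ j, 0 ≤ ψ j)
    (hnorm : ∑ j, ψ j ^ 2 = 1) : 0 < ∑ j, ψ j := by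
  obtain ⟨j, hj⟩ : ∃ j, ψ j ≠ 0 := by
    by_contra! h
    simp [h] at hnorm
  exact Finset.sum_pos' (fun i _ => hψ i) ⟨j, Finset.mem_univ j, (hψ j).lt_of_ne' hj⟩

theorem hadamard_nonneg_saturates_general (d : ℕ) (hd : 0 < d)
    (U : Matrix (Fin d) (Fin d) ℂ)
    (hmod : ∀ k j : Fin d, ‖U k j‖ = (Real.sqrt d)⁻¹)
    (hdephased : ∀ j : Fin d, U ⟨0, hd⟩ j = ((Real.sqrt d : ℝ)⁻¹ : ℂ))
    (ψ : Fin d → ℝ) (hψnonneg : ∀ j, 0 ≤ ψ j) (hψnorm : ∑ j, ψ j ^ 2 = 1) :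
    renyiEntropy (2 : ℝ≥0∞)⁻¹ (fun j => ψ j ^ 2) +
      renyiEntropy ⊤ (fun k => ‖U.mulVec (fun j => (ψ j : ℂ)) k‖ ^ 2)
      = Real.log d := by
  have hS := sum_pos_of_sum_sq_eq_one hψnonneg hψnorm
  have hmax : IsGreatest (Set.range fun k => ‖U.mulVec (fun j => (ψ j : ℂ)) k‖ ^ 2)
      (((Real.sqrt d)⁻¹ * ∑ j, ψ j) ^ 2) := by
    refine ⟨⟨⟨0, hd⟩, ?_⟩, ?_⟩
    · dsimp only
      rw [mulVec_apply_of_row_eq hdephased, ← Complex.ofReal_inv, ← Complex.ofReal_sum,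
        ← Complex.ofReal_mul, Complex.norm_real, Real.norm_of_nonneg (by positivity)]
    · rintro _ ⟨k, rfl⟩
      dsimp only
      gcongr
      exact norm_mulVec_ofReal_le (fun k j => (hmod k j).le) hψnonneg k
  have hd_pos : (0 : ℝ) < d := Nat.cast_pos.mpr hd
  rw [renyiEntropy_inv_two_sq hψnonneg, renyiEntropy_top_of_isGreatest hmax, Real.log_pow,
    Real.log_mul (by positivity) hS.ne', Real.log_inv, Real.log_sqrt hd_pos.le]
  ring

/-- For a dephased complex Hadamard matrix `U` and any entrywise-nonnegative real
unit vector `ψ`, the pair `(H_{1/2}, H_∞)` saturates the Maassen–Uffink bound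
`log d`. -/
theorem hadamard_nonneg_saturates (d : ℕ) (hd : 0 < d)
    (U : Matrix (Fin d) (Fin d) ℂ) (hU : U ∈ Matrix.unitaryGroup (Fin d) ℂ)
    (hmod : ∀ k j : Fin d, ‖U k j‖ = (Real.sqrt d)⁻¹)
    (hdephased : ∀ j : Fin d, U ⟨0, hd⟩ j = ((Real.sqrt d : ℝ)⁻¹ : ℂ))
    (ψ : Fin d → ℝ) (hψnonneg : ∀ j, 0 ≤ ψ j) (hψnorm : ∑ j, ψ j ^ 2 = 1) :
    renyiEntropy (2 : ℝ≥0∞)⁻¹ (fun j => ψ j ^ 2) +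
      renyiEntropy ⊤ (fun k => ‖U.mulVec (fun j => (ψ j : ℂ)) k‖ ^ 2)
      = Real.log d :=
  hadamard_nonneg_saturates_general d hd U hmod hdephased ψ hψnonneg hψnorm
end
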